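/- arXiv:1509.01605 — 6 statements merged into one kernel-verified Lean document; each statement's English description precedes it below -/
import Mathlib

section
/- The periodized q-Whittaker Markov chain is irreducible on Ω_{L,N;n1,n2}: one can pass from any dimer covering η ∈ Ω_{L,N;n1,n2} to any other covering η′ ∈ Ω_{L,N;n1,n2} by a finite chain of elementary moves, each of which shifts a single vertical dimer (particle) one step in the +e1 direction (equivalently, rotates the three dimers around one hexagonal face) while remaining inside Ω_{L,N;n1,n2}. -/
/-!
Dimer coverings (perfect matchings) of the hexagonal lattice `Λ_{L,N}` periodized with
period `L` in the `e₁` direction and period `N` in the `e₂` direction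
(Corwin–Toninelli, "A (2+1)-dimensional growth process with explicit stationary measures").

Black vertices, white vertices and hexagonal faces are all indexed by
`(ℤ/Lℤ) × (ℤ/Nℤ)`.  The edge of type `j ∈ {0,1,2}` at the black vertex `b = (s,t)` joins
`b` to the white vertex `whiteEnd b j`; type `0` edges are the vertical ones ("particles"),
type `1` edges are the north-west oriented ones, type `2` edges are the remaining
(horizontal) ones.  A face `g = (s,t)` is bordered by the six edges
`(s,t,0), (s-1,t,0), (s,t,1), (s,t-1,1), (s-1,t,2), (s,t-1,2)`; stepping from a face to an
adjacent face in direction `+e₁` crosses a vertical edge with the white vertex on the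
right, stepping in direction `+e₂` crosses a north-west edge with the white vertex on the
left.
-/

open scoped Classical

noncomputable section

namespace HexDimers

/-- The common index set for black vertices, white vertices and faces of `Λ_{L,N}`. -/
abbrev Idx (L N : ℕ) := ZMod L × ZMod N

variable {L N : ℕ}

/-- The white endpoint of the edge of type `j` at the black vertex `b`:
type `0` is vertical, type `1` is north-west, type `2` is horizontal. -/
def whiteEnd (b : Idx L N) : Fin 3 → Idx L N :=
  ![b, (b.1 - 1, b.2 + 1), (b.1, b.2 + 1)]

/-- A candidate dimer covering: for every black vertex, the type of the dimer covering it. -/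
abbrev Covering (L N : ℕ) := Idx L N → Fin 3

/-- Perfect matchings (dimer coverings): distinct black vertices are matched to distinct
white vertices (hence, by counting, every white vertex is covered exactly once). -/
def IsCovering (M : Covering L N) : Prop :=
  Function.Injective fun b => whiteEnd b (M b)

/-- The number `n₁` of vertical dimers of a covering. -/
def nVert [NeZero L] [NeZero N] (M : Covering L N) : ℕ :=
  (Finset.univ.filter fun b : Idx L N => M b = 0).card

/-- The number `n₂` of north-west oriented dimers of a covering. -/
def nNW [NeZero L] [NeZero N] (M : Covering L N) : ℕ :=
  (Finset.univ.filter fun b : Idx L N => M b = 1).card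

/-- `Ω_{L,N;n₁,n₂}`: the dimer coverings of `Λ_{L,N}` with `n₁` vertical dimers and `n₂`
north-west oriented dimers. -/
def Omega (L N : ℕ) [NeZero L] [NeZero N] (n1 n2 : ℕ) : Set (Covering L N) :=
  {M | IsCovering M ∧ nVert M = n1 ∧ nNW M = n2}

/-- The six directions in which a face of `Λ_{L,N}` can be left towards an adjacent face:
`R/Lft` are `±e₁`, `U/D` are `±e₂`, and `UL/DR` are `∓(e₁ - e₂)`. -/
inductive Dir | R | Lft | U | D | UL | DR
  deriving DecidableEq

/-- The face reached from the face `g` by one step in direction `d`. -/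
def nextFace (g : Idx L N) : Dir → Idx L N
  | .R => (g.1 + 1, g.2)
  | .Lft => (g.1 - 1, g.2)
  | .U => (g.1, g.2 + 1)
  | .D => (g.1, g.2 - 1)
  | .UL => (g.1 - 1, g.2 + 1)
  | .DR => (g.1 + 1, g.2 - 1)

/-- The edge (given by its black vertex together with its type) crossed when stepping from
the face `g` in direction `d`. -/
def crossEdge (g : Idx L N) : Dir → Idx L N × Fin 3
  | .R => ((g.1, g.2), 0)
  | .Lft => ((g.1 - 1, g.2), 0)
  | .U => ((g.1, g.2), 1)
  | .D => ((g.1, g.2 - 1), 1)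
  | .UL => ((g.1 - 1, g.2), 2)
  | .DR => ((g.1, g.2 - 1), 2)

/-- The sign `ε_e` of a crossing: `+1` if the edge is crossed with the white vertex on the
right, `-1` if it is crossed with the white vertex on the left. -/
def crossSign : Dir → ℤ
  | .R => 1
  | .Lft => -1
  | .U => -1
  | .D => 1
  | .UL => 1
  | .DR => -1

/-- Whether the edge `e` (black vertex and type) is occupied by a dimer of `M`. -/
def occupiedEdge (M : Covering L N) (e : Idx L N × Fin 3) : Prop := M e.1 = e.2

/-- The elementary move at the face `g` is allowed when the three boundary edges of `g`
with the white vertex on the left are all occupied. -/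
def RotatableAt (M : Covering L N) (g : Idx L N) : Prop :=
  M g = 1 ∧ M (g.1 - 1, g.2) = 0 ∧ M (g.1, g.2 - 1) = 2

/-- The elementary move (rotation of three dimers around the face `g`): the vertical dimer
of the face is shifted by `+e₁`. -/
def rotate (M : Covering L N) (g : Idx L N) : Covering L N := fun b =>
  if b = g then 0
  else if b = (g.1 - 1, g.2) then 2
  else if b = (g.1, g.2 - 1) then 1
  else M b

/-- One elementary move inside `Ω_{L,N;n₁,n₂}`. -/
def ElemMove (L N : ℕ) [NeZero L] [NeZero N] (n1 n2 : ℕ) (M M' : Covering L N) : Prop :=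
  M ∈ Omega L N n1 n2 ∧ M' ∈ Omega L N n1 n2 ∧
    ∃ g : Idx L N, RotatableAt M g ∧ M' = rotate M g

end HexDimers

/-!
Height functions are lifted to the faces `ℤ²` of the universal cover: crossing an edge `e` with
sign `ε` changes the height by `ε (1 - 3·1_{e occupied})`. A configuration has a height function
iff it covers every white vertex exactly once, and the height grows by `L - 3n₁/N` and
`3n₂/L - N` over the two periods. So for `η, η' ∈ Ω` with height functions `φ` and `ψ` the
difference `Δ = ψ - φ` is biperiodic, and it can be normalised to be nonnegative and divisible
by `3`. An elementary move of `η` at `g` adds `3` to `φ` above `g`, lowering `Δ` there.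

Among the faces where `Δ` is maximal take one minimising the tilted height
`NL·φ - (NL - 3n₁) x + (NL - 3n₂) y`, which is biperiodic. Crossing a vacant edge with the white
vertex on the left lowers `φ` by `1`, so it does not lower `Δ`, and it lowers the tilted height
by `3n₂`, `3n₁` or `3(NL - n₁ - n₂)`, all positive. Hence the three such edges of the chosen face
are occupied and the face can be rotated, lowering `∑ Δ` over the torus by `3`. When `Δ = 0`,
`η = η'`.
-/

open Finset

theorem Fin.eq_zero_or_eq_one_or_eq_two (i : Fin 3) : i = 0 ∨ i = 1 ∨ i = 2 := by
  revert i; decide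

theorem ZMod.sum_range_intCast_add {n : ℕ} [NeZero n] {α : Type*} [AddCommMonoid α]
    (f : ZMod n → α) (x : ℤ) : ∑ i ∈ range n, f ((x + i : ℤ) : ZMod n) = ∑ s, f s := by
  refine sum_nbij' (fun i => ((x + i : ℤ) : ZMod n)) (fun s => (s - x).val) ?_ ?_ ?_ ?_ ?_
  · simp
  · simp [ZMod.val_lt]
  · intro i hi
    simp only [mem_range] at hi
    simp [ZMod.val_cast_of_lt hi]
  · intro s _
    simp
  · simp

theorem Function.Periodic.sum_range_add {g : ℤ → ℤ} (hg : Function.Periodic g 1) (n : ℕ)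
    (t : ℤ) : ∑ j ∈ range n, g (t + j) = n * g t := by
  simp [fun j : ℕ => by simpa using (hg.nat_mul j) t]

theorem Int.dvd_sub_of_forall_dvd_sub_add_one {f : ℤ → ℤ} {n : ℤ}
    (h : ∀ x, n ∣ f (x + 1) - f x) (x : ℤ) : n ∣ f x - f 0 := by
  induction x using Int.induction_on with
  | zero => simp
  | succ k ih => simpa using dvd_add ih (h k)
  | pred k ih => simpa using dvd_sub ih (h (-k - 1))

theorem Int.exists_antideriv (f : ℤ → ℤ) :
    ∃ F : ℤ → ℤ, F 0 = 0 ∧ ∀ x, F (x + 1) = F x + f x := by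
  refine ⟨fun x => ∑ i ∈ Finset.range x.toNat, f i - ∑ i ∈ Finset.range (-x).toNat, f (-i - 1),
    by simp, fun x => ?_⟩
  dsimp only
  rcases le_or_gt 0 x with hx | hx
  · rw [show (x + 1).toNat = x.toNat + 1 by omega, show (-(x + 1)).toNat = 0 by omega,
      show (-x).toNat = 0 by omega, sum_range_succ, Int.toNat_of_nonneg hx]
    simp
  · rw [show (x + 1).toNat = 0 by omega, show x.toNat = 0 by omega,
      show (-x).toNat = (-(x + 1)).toNat + 1 by omega, sum_range_succ,
      Int.toNat_of_nonneg (by omega : 0 ≤ -(x + 1))]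
    simp

theorem Int.exists_potential (f g : ℤ → ℤ → ℤ)
    (hcurl : ∀ x y, f x y + g (x + 1) y = g x y + f x (y + 1)) :
    ∃ φ : ℤ → ℤ → ℤ, ∀ x y, φ (x + 1) y = φ x y + f x y ∧ φ x (y + 1) = φ x y + g x y := by
  obtain ⟨F, -, hF⟩ := Int.exists_antideriv (f · 0)
  choose G hG0 hG using fun x => Int.exists_antideriv (g x)
  have hGstep : ∀ x y, G (x + 1) y = G x y + f x y - f x 0 := by
    intro x y
    induction y using Int.induction_on with
    | zero => simp [hG0]
    | succ y ih => rw [hG, hG, ih]; linarith [hcurl x y]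
    | pred y ih =>
      have h₁ := hG (x + 1) (-y - 1)
      have h₂ := hG x (-y - 1)
      have h₃ := hcurl x (-y - 1)
      rw [sub_add_cancel] at h₁ h₂ h₃
      linarith
  exact ⟨fun x y => F x + G x y, fun x y =>
    ⟨by dsimp only; rw [hF, hGstep]; ring, by dsimp only; rw [hG]; ring⟩⟩

namespace HexDimers

variable {L N : ℕ}

section Covering

def whiteDegree (M : Covering L N) (w : Idx L N) : ℤ :=
  (if M w = 0 then 1 else 0) + (if M (w.1 + 1, w.2 - 1) = 1 then 1 else 0) +
    (if M (w.1, w.2 - 1) = 2 then 1 else 0)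

theorem ite_whiteEnd_eq (M : Covering L N) (b w : Idx L N) :
    (if whiteEnd b (M b) = w then 1 else 0 : ℤ) =
      (if b = w then if M b = 0 then 1 else 0 else 0) +
      (if b = (w.1 + 1, w.2 - 1) then if M b = 1 then 1 else 0 else 0) +
      (if b = (w.1, w.2 - 1) then if M b = 2 then 1 else 0 else 0) := by
  rcases Fin.eq_zero_or_eq_one_or_eq_two (M b) with h | h | h <;>
    simp [h, whiteEnd, Prod.ext_iff, sub_eq_iff_eq_add, eq_sub_iff_add_eq]

theorem card_filter_whiteEnd_eq_whiteDegree [NeZero L] [NeZero N] (M : Covering L N)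
    (w : Idx L N) : (#{b | whiteEnd b (M b) = w} : ℤ) = whiteDegree M w := by
  simp only [natCast_card_filter, ite_whiteEnd_eq, sum_add_distrib, sum_ite_eq', mem_univ,
    if_true, whiteDegree]

theorem isCovering_iff_whiteDegree [NeZero L] [NeZero N] {M : Covering L N} :
    IsCovering M ↔ ∀ w, whiteDegree M w = 1 := by
  simp only [IsCovering, Finite.injective_iff_bijective, Function.bijective_iff_existsUnique,
    Fintype.existsUnique_iff_card_one, ← card_filter_whiteEnd_eq_whiteDegree]
  exact forall_congr' fun w => by norm_cast

end Covering

section Height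

/-- The face `(x, y)` of `ℤ²` lies over the face `(x mod L, y mod N)`; the steps `+e₁` and `+e₂`
from it cross the edges of types `0` and `1` at the black vertex `(x mod L, y mod N)`. -/
def IsHeight (M : Covering L N) (φ : ℤ → ℤ → ℤ) : Prop :=
  ∀ x y : ℤ, φ (x + 1) y = φ x y + (if M (x, y) = 0 then -2 else 1) ∧
    φ x (y + 1) = φ x y - (if M (x, y) = 1 then -2 else 1)

theorem curl_iff_whiteDegree (M : Covering L N) (b : Idx L N) :
    (if M b = 0 then -2 else 1) - (if M (b.1 + 1, b.2) = 1 then -2 else 1) =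
        (if M (b.1, b.2 + 1) = 0 then -2 else 1) - (if M b = 1 then -2 else (1 : ℤ)) ↔
      whiteDegree M (b.1, b.2 + 1) = 1 := by
  simp only [whiteDegree, add_sub_cancel_right]
  rcases Fin.eq_zero_or_eq_one_or_eq_two (M b) with h | h | h <;>
    rcases Fin.eq_zero_or_eq_one_or_eq_two (M (b.1 + 1, b.2)) with h' | h' | h' <;>
    rcases Fin.eq_zero_or_eq_one_or_eq_two (M (b.1, b.2 + 1)) with h'' | h'' | h'' <;>
    simp [h, h', h'']

theorem exists_isHeight_iff {M : Covering L N} :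
    (∃ φ, IsHeight M φ) ↔ ∀ w, whiteDegree M w = 1 := by
  constructor
  · rintro ⟨φ, hφ⟩ w
    obtain ⟨x, hx⟩ := ZMod.intCast_surjective w.1
    obtain ⟨y, hy⟩ := ZMod.intCast_surjective (w.2 - 1)
    have hw : w = (((x : ZMod L), (y : ZMod N)).1, ((x : ZMod L), (y : ZMod N)).2 + 1) := by
      simp [hx, hy]
    rw [hw, ← curl_iff_whiteDegree]
    have h₁ := (hφ (x + 1) y).2
    have h₂ := (hφ x (y + 1)).1
    rw [(hφ x y).1] at h₁
    rw [(hφ x y).2] at h₂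
    push_cast at h₁ h₂
    linarith
  · intro hM
    refine Int.exists_potential _ _ fun x y => ?_
    have := (curl_iff_whiteDegree M ((x : ZMod L), (y : ZMod N))).2 (hM _)
    push_cast
    linarith

theorem IsCovering.exists_isHeight [NeZero L] [NeZero N] {M : Covering L N}
    (hM : IsCovering M) : ∃ φ, IsHeight M φ :=
  exists_isHeight_iff.2 (isCovering_iff_whiteDegree.1 hM)

theorem IsHeight.isCovering [NeZero L] [NeZero N] {M : Covering L N} {φ : ℤ → ℤ → ℤ}
    (hφ : IsHeight M φ) : IsCovering M :=
  isCovering_iff_whiteDegree.2 (exists_isHeight_iff.1 ⟨φ, hφ⟩)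

theorem IsHeight.add_const {M : Covering L N} {φ : ℤ → ℤ → ℤ} (hφ : IsHeight M φ) (c : ℤ) :
    IsHeight M fun x y => φ x y + c := fun x y => by
  obtain ⟨hR, hU⟩ := hφ x y
  constructor <;> linarith

theorem IsHeight.eq_of_isHeight {M M' : Covering L N} {φ : ℤ → ℤ → ℤ} (hφ : IsHeight M φ)
    (hφ' : IsHeight M' φ) : M = M' := by
  funext b
  obtain ⟨x, hx⟩ := ZMod.intCast_surjective b.1
  obtain ⟨y, hy⟩ := ZMod.intCast_surjective b.2
  have hR := (hφ x y).1.symm.trans (hφ' x y).1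
  have hU := (hφ x y).2.symm.trans (hφ' x y).2
  rw [show b = ((x : ZMod L), (y : ZMod N)) by simp [hx, hy]]
  simp only [add_right_inj, sub_right_inj] at hR hU
  generalize M (x, y) = i at hR hU
  generalize M' (x, y) = j at hR hU
  revert i j
  decide

def Dir.vec : Dir → ℤ × ℤ
  | .R => (1, 0)
  | .Lft => (-1, 0)
  | .U => (0, 1)
  | .D => (0, -1)
  | .UL => (-1, 1)
  | .DR => (1, -1)

theorem IsHeight.step {M : Covering L N} {φ : ℤ → ℤ → ℤ} (hφ : IsHeight M φ) (x y : ℤ)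
    (d : Dir) :
    φ (x + d.vec.1) (y + d.vec.2) =
      φ x y + crossSign d * if occupiedEdge M (crossEdge (x, y) d) then -2 else 1 := by
  obtain ⟨hR, hU⟩ := hφ x y
  obtain ⟨hLR, hLU⟩ := hφ (x - 1) y
  obtain ⟨hDR, hDU⟩ := hφ x (y - 1)
  simp only [sub_add_cancel] at hLR hLU hDR hDU
  push_cast at hLR hLU hDR hDU
  cases d <;> simp only [Dir.vec, crossSign, crossEdge, occupiedEdge, add_zero, one_mul,
    neg_one_mul, ← sub_eq_add_neg]
  · by_cases h : M (↑x, ↑y) = 0 <;>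
      simp only [h, Fin.isValue, Fin.reduceEq, ↓reduceIte] at * <;> linarith
  · by_cases h : M (↑x - 1, ↑y) = 0 <;>
      simp only [h, Fin.isValue, Fin.reduceEq, ↓reduceIte] at * <;> linarith
  · by_cases h : M (↑x, ↑y) = 1 <;>
      simp only [h, Fin.isValue, Fin.reduceEq, ↓reduceIte] at * <;> linarith
  · by_cases h : M (↑x, ↑y - 1) = 1 <;>
      simp only [h, Fin.isValue, Fin.reduceEq, ↓reduceIte] at * <;> linarith
  · rcases Fin.eq_zero_or_eq_one_or_eq_two (M (↑x - 1, ↑y)) with h | h | h <;>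
      simp only [h, Fin.isValue, Fin.reduceEq, ↓reduceIte] at * <;> linarith
  · rcases Fin.eq_zero_or_eq_one_or_eq_two (M (↑x, ↑y - 1)) with h | h | h <;>
      simp only [h, Fin.isValue, Fin.reduceEq, ↓reduceIte] at * <;> linarith

theorem IsHeight.three_dvd_sub {M M' : Covering L N} {φ ψ : ℤ → ℤ → ℤ} (hφ : IsHeight M φ)
    (hψ : IsHeight M' ψ) (x y : ℤ) : 3 ∣ (ψ x y - φ x y) - (ψ 0 0 - φ 0 0) := by
  have hx := Int.dvd_sub_of_forall_dvd_sub_add_one (f := fun x => ψ x 0 - φ x 0) (n := 3)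
    (fun x => by simp only [(hφ x 0).1, (hψ x 0).1]; split_ifs <;> omega) x
  have hy := Int.dvd_sub_of_forall_dvd_sub_add_one (f := fun y => ψ x y - φ x y) (n := 3)
    (fun y => by simp only [(hφ x y).2, (hψ x y).2]; split_ifs <;> omega) y
  simpa using dvd_add hy hx

end Height

section Periods

def IsBiperiodic (L N : ℕ) (f : ℤ → ℤ → ℤ) : Prop :=
  ∀ x y, f (x + L) y = f x y ∧ f x (y + N) = f x y

theorem IsBiperiodic.eq_of_intCast_eq {f : ℤ → ℤ → ℤ} (hf : IsBiperiodic L N f)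
    {x y x' y' : ℤ} (hx : (x : ZMod L) = x') (hy : (y : ZMod N) = y') : f x y = f x' y' := by
  obtain ⟨k, hk⟩ := (ZMod.intCast_eq_intCast_iff_dvd_sub _ _ _).1 hx
  obtain ⟨l, hl⟩ := (ZMod.intCast_eq_intCast_iff_dvd_sub _ _ _).1 hy
  have hpx : ∀ y, Function.Periodic (f · y) L := fun y x => (hf x y).1
  have hpy : ∀ x, Function.Periodic (f x) N := fun x y => (hf x y).2
  calc f x y = f x (y + l * N) := ((hpy x).int_mul l y).symm
    _ = f (x + k * L) (y + l * N) := ((hpx _).int_mul k x).symm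
    _ = f x' y' := by rw [show x' = x + k * L by linarith, show y' = y + l * N by linarith]

theorem IsBiperiodic.eq_val [NeZero L] [NeZero N] {f : ℤ → ℤ → ℤ} (hf : IsBiperiodic L N f)
    (x y : ℤ) : f x y = f (x : ZMod L).val (y : ZMod N).val :=
  hf.eq_of_intCast_eq (by simp) (by simp)

theorem IsBiperiodic.exists_forall_ge [NeZero L] [NeZero N] {f : ℤ → ℤ → ℤ}
    (hf : IsBiperiodic L N f) : ∃ x₀ y₀ : ℤ, ∀ x y, f x₀ y₀ ≤ f x y := by
  obtain ⟨h₀, hh₀⟩ := Finite.exists_min fun h : Idx L N => f h.1.val h.2.val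
  exact ⟨_, _, fun x y => by rw [hf.eq_val x y]; exact hh₀ ((x : ZMod L), (y : ZMod N))⟩

theorem IsBiperiodic.exists_forall_le_of_descent [NeZero L] [NeZero N] {Δ T : ℤ → ℤ → ℤ}
    (hΔ : IsBiperiodic L N Δ) (hT : IsBiperiodic L N T) (P : ℤ → ℤ → Prop)
    (hdesc : ∀ x y, ¬ P x y → ∃ x' y', Δ x y ≤ Δ x' y' ∧ T x' y' < T x y) :
    ∃ x y, P x y ∧ ∀ x' y', Δ x' y' ≤ Δ x y := by
  let Δ' (h : Idx L N) : ℤ := Δ h.1.val h.2.val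
  let T' (h : Idx L N) : ℤ := T h.1.val h.2.val
  obtain ⟨h₀, hh₀⟩ := Finite.exists_max Δ'
  obtain ⟨g, hg, hgmin⟩ := (univ.filter fun h => Δ' h = Δ' h₀).exists_min_image T' ⟨h₀, by simp⟩
  have hg₀ : Δ' g = Δ' h₀ := (mem_filter.1 hg).2
  have hmax : ∀ x' y', Δ x' y' ≤ Δ' g := fun x' y' => by
    rw [hg₀, hΔ.eq_val]
    exact hh₀ ((x' : ZMod L), (y' : ZMod N))
  refine ⟨_, _, by_contra fun hP => ?_, hmax⟩
  obtain ⟨x', y', hle, hlt⟩ := hdesc _ _ hP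
  have hmem : ((x' : ZMod L), (y' : ZMod N)) ∈ univ.filter fun h => Δ' h = Δ' h₀ := by
    rw [mem_filter, ← hg₀]
    simp only [mem_univ, true_and, Δ', ← hΔ.eq_val]
    exact le_antisymm (hmax x' y') hle
  have := hgmin _ hmem
  simp only [T', ← hT.eq_val] at this
  exact absurd hlt (not_lt.2 this)

theorem sum_range_sum_range_intCast_add [NeZero L] [NeZero N] {α : Type*} [AddCommMonoid α]
    (f : Idx L N → α) (x y : ℤ) :
    ∑ j ∈ range N, ∑ i ∈ range L, f ((x + i : ℤ), (y + j : ℤ)) = ∑ b, f b := by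
  rw [Fintype.sum_prod_type_right, ← ZMod.sum_range_intCast_add _ y]
  exact sum_congr rfl fun j _ => ZMod.sum_range_intCast_add (fun s => f (s, _)) x

theorem sum_ite_neg_two_one [NeZero L] [NeZero N] (M : Covering L N) (k : Fin 3) :
    ∑ b, (if M b = k then (-2 : ℤ) else 1) = N * L - 3 * #{b | M b = k} := by
  have : ∀ b, (if M b = k then (-2 : ℤ) else 1) = 1 - 3 * if M b = k then 1 else 0 :=
    fun b => by split_ifs <;> norm_num
  simp only [this, sum_sub_distrib, ← mul_sum, natCast_card_filter, sum_const, card_univ,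
    Fintype.card_prod, ZMod.card]
  ring

theorem IsHeight.sub_eq_sum_range_fst {M : Covering L N} {φ : ℤ → ℤ → ℤ} (hφ : IsHeight M φ)
    (x y : ℤ) (n : ℕ) :
    φ (x + n) y - φ x y = ∑ i ∈ range n, if M ((x + i : ℤ), y) = 0 then -2 else 1 := by
  calc φ (x + n) y - φ x y = ∑ i ∈ range n, (φ (x + (i + 1 : ℕ)) y - φ (x + i) y) := by
        rw [sum_range_sub (fun i : ℕ => φ (x + i) y)]; simp
    _ = _ := sum_congr rfl fun i _ => by rw [Nat.cast_succ, ← add_assoc, (hφ _ _).1]; ring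

theorem IsHeight.sub_eq_sum_range_snd {M : Covering L N} {φ : ℤ → ℤ → ℤ} (hφ : IsHeight M φ)
    (x y : ℤ) (n : ℕ) :
    φ x (y + n) - φ x y = ∑ j ∈ range n, -if M (x, (y + j : ℤ)) = 1 then -2 else 1 := by
  calc φ x (y + n) - φ x y = ∑ j ∈ range n, (φ x (y + (j + 1 : ℕ)) - φ x (y + j)) := by
        rw [sum_range_sub (fun j : ℕ => φ x (y + j))]; simp
    _ = _ := sum_congr rfl fun j _ => by rw [Nat.cast_succ, ← add_assoc, (hφ _ _).2]; ring

theorem IsHeight.mul_period_fst [NeZero L] [NeZero N] {M : Covering L N} {φ : ℤ → ℤ → ℤ}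
    (hφ : IsHeight M φ) (x y : ℤ) :
    N * (φ (x + L) y - φ x y) = N * L - 3 * nVert M := by
  have hper : Function.Periodic (fun t => φ (x + L) t - φ x t) 1 := fun t => by
    simp only [(hφ _ _).2]
    push_cast
    simp
  rw [← hper.sum_range_add, nVert, ← sum_ite_neg_two_one M 0,
    ← sum_range_sum_range_intCast_add _ x y]
  exact sum_congr rfl fun j _ => hφ.sub_eq_sum_range_fst _ _ _

theorem IsHeight.mul_period_snd [NeZero L] [NeZero N] {M : Covering L N} {φ : ℤ → ℤ → ℤ}
    (hφ : IsHeight M φ) (x y : ℤ) :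
    L * (φ x (y + N) - φ x y) = 3 * nNW M - N * L := by
  have hper : Function.Periodic (fun s => φ s (y + N) - φ s y) 1 := fun s => by
    simp only [(hφ _ _).1]
    push_cast
    simp
  rw [← hper.sum_range_add, show 3 * (nNW M : ℤ) - N * L = -(N * L - 3 * nNW M) by ring, nNW,
    ← sum_ite_neg_two_one M 1, ← sum_range_sum_range_intCast_add _ x y, sum_comm,
    ← sum_neg_distrib]
  refine sum_congr rfl fun i _ => ?_
  rw [hφ.sub_eq_sum_range_snd, ← sum_neg_distrib]

theorem isBiperiodic_sub_iff [NeZero L] [NeZero N] {M M' : Covering L N} {φ ψ : ℤ → ℤ → ℤ}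
    (hφ : IsHeight M φ) (hψ : IsHeight M' ψ) :
    IsBiperiodic L N (fun x y => ψ x y - φ x y) ↔ nVert M = nVert M' ∧ nNW M = nNW M' := by
  have hN : (N : ℤ) ≠ 0 := by exact_mod_cast NeZero.ne N
  have hL : (L : ℤ) ≠ 0 := by exact_mod_cast NeZero.ne L
  constructor
  · intro h
    obtain ⟨h₁, h₂⟩ := h 0 0
    have := hφ.mul_period_fst 0 0
    have := hψ.mul_period_fst 0 0
    have := hφ.mul_period_snd 0 0
    have := hψ.mul_period_snd 0 0
    constructor <;> (apply Nat.cast_injective (R := ℤ); nlinarith)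
  · rintro ⟨h₁, h₂⟩ x y
    constructor
    · have := hφ.mul_period_fst x y
      have := hψ.mul_period_fst x y
      exact mul_left_cancel₀ hN (by rw [h₁] at *; linarith)
    · have := hφ.mul_period_snd x y
      have := hψ.mul_period_snd x y
      exact mul_left_cancel₀ hL (by rw [h₂] at *; linarith)

theorem isBiperiodic_sub_of_mem_Omega [NeZero L] [NeZero N] {n1 n2 : ℕ} {M M' : Covering L N}
    {φ ψ : ℤ → ℤ → ℤ} (hM : M ∈ Omega L N n1 n2) (hM' : M' ∈ Omega L N n1 n2)
    (hφ : IsHeight M φ) (hψ : IsHeight M' ψ) : IsBiperiodic L N fun x y => ψ x y - φ x y :=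
  (isBiperiodic_sub_iff hφ hψ).2 ⟨hM.2.1.trans hM'.2.1.symm, hM.2.2.trans hM'.2.2.symm⟩

theorem exists_isHeight_nonneg_three_dvd [NeZero L] [NeZero N] {M M' : Covering L N}
    (hM : IsCovering M) (hM' : IsCovering M') (h₁ : nVert M = nVert M') (h₂ : nNW M = nNW M') :
    ∃ φ ψ, IsHeight M φ ∧ IsHeight M' ψ ∧ ∀ x y, 0 ≤ ψ x y - φ x y ∧ 3 ∣ ψ x y - φ x y := by
  obtain ⟨φ, hφ⟩ := hM.exists_isHeight
  obtain ⟨ψ, hψ⟩ := hM'.exists_isHeight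
  obtain ⟨x₀, y₀, hmin⟩ := ((isBiperiodic_sub_iff hφ hψ).2 ⟨h₁, h₂⟩).exists_forall_ge
  refine ⟨_, ψ, hφ.add_const (ψ x₀ y₀ - φ x₀ y₀), hψ, fun x y => ⟨?_, ?_⟩⟩
  · linarith [hmin x y]
  · rw [show ψ x y - (φ x y + (ψ x₀ y₀ - φ x₀ y₀)) = (ψ x y - φ x y - (ψ 0 0 - φ 0 0)) -
      (ψ x₀ y₀ - φ x₀ y₀ - (ψ 0 0 - φ 0 0)) by ring]
    exact dvd_sub (hφ.three_dvd_sub hψ x y) (hφ.three_dvd_sub hψ x₀ y₀)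

end Periods

section Rotation

variable {M : Covering L N} {g : Idx L N}

theorem RotatableAt.ite_rotate (hg : RotatableAt M g) (b : Idx L N) :
    ((if M b = 0 then -2 else 1) + (if (b.1 + 1, b.2) = g then 3 else 0) =
        (if b = g then 3 else 0) + (if rotate M g b = 0 then -2 else (1 : ℤ))) ∧
      (-(if M b = 1 then -2 else 1) + (if (b.1, b.2 + 1) = g then 3 else 0) =
        (if b = g then 3 else 0) - (if rotate M g b = 1 then -2 else (1 : ℤ))) := by
  obtain ⟨h1, h0, h2⟩ := hg
  obtain ⟨s, t⟩ := b
  obtain ⟨u, v⟩ := g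
  simp only [rotate] at h0 h1 h2 ⊢
  split_ifs <;> simp_all [Prod.ext_iff, ← eq_sub_iff_add_eq]

theorem IsHeight.rotate {φ : ℤ → ℤ → ℤ} (hφ : IsHeight M φ) (hg : RotatableAt M g) :
    IsHeight (rotate M g) fun x y => φ x y + if ((x : ZMod L), (y : ZMod N)) = g then 3 else 0 :=
  fun x y => by
    obtain ⟨hR, hU⟩ := hφ x y
    obtain ⟨eR, eU⟩ := hg.ite_rotate ((x : ZMod L), (y : ZMod N))
    push_cast
    constructor <;> linarith

theorem RotatableAt.rotate_mem_Omega [NeZero L] [NeZero N] {n1 n2 : ℕ} (hg : RotatableAt M g)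
    (hM : M ∈ Omega L N n1 n2) : rotate M g ∈ Omega L N n1 n2 := by
  obtain ⟨φ, hφ⟩ := hM.1.exists_isHeight
  have hφ' := hφ.rotate hg
  obtain ⟨h₁, h₂⟩ := (isBiperiodic_sub_iff hφ hφ').1 fun x y => by simp
  exact ⟨hφ'.isCovering, h₁ ▸ hM.2.1, h₂ ▸ hM.2.2⟩

end Rotation

section Descent

/-- `N L φ` minus its average slopes (`IsHeight.mul_period_fst`, `IsHeight.mul_period_snd`). -/
def tiltedHeight [NeZero L] [NeZero N] (M : Covering L N) (φ : ℤ → ℤ → ℤ) (x y : ℤ) : ℤ :=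
  N * L * φ x y - (N * L - 3 * nVert M) * x + (N * L - 3 * nNW M) * y

theorem IsHeight.isBiperiodic_tiltedHeight [NeZero L] [NeZero N] {M : Covering L N}
    {φ : ℤ → ℤ → ℤ} (hφ : IsHeight M φ) : IsBiperiodic L N (tiltedHeight M φ) := fun x y => by
  simp only [tiltedHeight]
  constructor
  · linear_combination (L : ℤ) * hφ.mul_period_fst x y
  · linear_combination (N : ℤ) * hφ.mul_period_snd x y

theorem IsHeight.exists_descent [NeZero L] [NeZero N] {M : Covering L N} {φ : ℤ → ℤ → ℤ}
    (hφ : IsHeight M φ) (h₁ : 0 < nVert M) (h₂ : 0 < nNW M) (h₁₂ : nVert M + nNW M < N * L)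
    {x y : ℤ} (hxy : ¬ RotatableAt M (x, y)) :
    ∃ d : Dir, crossSign d = -1 ∧ φ (x + d.vec.1) (y + d.vec.2) = φ x y - 1 ∧
      tiltedHeight M φ (x + d.vec.1) (y + d.vec.2) < tiltedHeight M φ x y := by
  have key : ∀ d, crossSign d = -1 → ¬ occupiedEdge M (crossEdge (x, y) d) →
      φ (x + d.vec.1) (y + d.vec.2) = φ x y - 1 ∧
        tiltedHeight M φ (x + d.vec.1) (y + d.vec.2) < tiltedHeight M φ x y := by
    intro d hd hvac
    have hstep := hφ.step x y d
    rw [if_neg hvac, hd] at hstep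
    refine ⟨by linarith, ?_⟩
    simp only [tiltedHeight, hstep]
    have : (nVert M + nNW M : ℤ) < N * L := by exact_mod_cast h₁₂
    have : (0 : ℤ) < nVert M := by exact_mod_cast h₁
    have : (0 : ℤ) < nNW M := by exact_mod_cast h₂
    cases d <;> norm_num [crossSign] at hd <;> simp only [Dir.vec] <;> linarith
  simp only [RotatableAt, not_and_or] at hxy
  rcases hxy with h | h | h
  · exact ⟨.U, rfl, key .U rfl h⟩
  · exact ⟨.Lft, rfl, key .Lft rfl h⟩
  · exact ⟨.DR, rfl, key .DR rfl h⟩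

theorem exists_rotatableAt_forall_le [NeZero L] [NeZero N] {M M' : Covering L N}
    {φ ψ : ℤ → ℤ → ℤ} (hφ : IsHeight M φ) (hψ : IsHeight M' ψ)
    (hΔ : IsBiperiodic L N fun x y => ψ x y - φ x y)
    (h₁ : 0 < nVert M) (h₂ : 0 < nNW M) (h₁₂ : nVert M + nNW M < N * L) :
    ∃ x y : ℤ, RotatableAt M (x, y) ∧ ∀ x' y', ψ x' y' - φ x' y' ≤ ψ x y - φ x y := by
  refine hΔ.exists_forall_le_of_descent hφ.isBiperiodic_tiltedHeight
    (fun x y => RotatableAt M (x, y)) fun x y hxy => ?_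
  obtain ⟨d, hd, hφd, hT⟩ := hφ.exists_descent h₁ h₂ h₁₂ hxy
  refine ⟨_, _, ?_, hT⟩
  have hψd := hψ.step x y d
  rw [hd] at hψd
  split_ifs at hψd <;> linarith

theorem eq_of_sum_eq_zero [NeZero L] [NeZero N] {M M' : Covering L N} {φ ψ : ℤ → ℤ → ℤ}
    (hφ : IsHeight M φ) (hψ : IsHeight M' ψ) (hΔ : IsBiperiodic L N fun x y => ψ x y - φ x y)
    (hnonneg : ∀ x y, 0 ≤ ψ x y - φ x y)
    (hsum : ∑ h : Idx L N, (ψ h.1.val h.2.val - φ h.1.val h.2.val) = 0) : M = M' := by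
  have hzero := (sum_eq_zero_iff_of_nonneg fun h _ => hnonneg _ _).1 hsum
  have : ψ = φ := funext₂ fun x y => by
    have := hzero ((x : ZMod L), (y : ZMod N)) (mem_univ _)
    have := hΔ.eq_val x y
    linarith
  exact hφ.eq_of_isHeight (this ▸ hψ)

theorem exists_rotate_sum_eq [NeZero L] [NeZero N] {M M' : Covering L N} {φ ψ : ℤ → ℤ → ℤ}
    (hφ : IsHeight M φ) (hψ : IsHeight M' ψ) (hΔ : IsBiperiodic L N fun x y => ψ x y - φ x y)
    (h₁ : 0 < nVert M) (h₂ : 0 < nNW M) (h₁₂ : nVert M + nNW M < N * L)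
    (hΔ₃ : ∀ x y, 0 ≤ ψ x y - φ x y ∧ 3 ∣ ψ x y - φ x y) {k : ℕ}
    (hsum : ∑ h : Idx L N, (ψ h.1.val h.2.val - φ h.1.val h.2.val) = 3 * (k + 1)) :
    ∃ g, RotatableAt M g ∧ ∃ φ', IsHeight (rotate M g) φ' ∧
      (∀ x y, 0 ≤ ψ x y - φ' x y ∧ 3 ∣ ψ x y - φ' x y) ∧
      ∑ h : Idx L N, (ψ h.1.val h.2.val - φ' h.1.val h.2.val) = 3 * k := by
  obtain ⟨x, y, hg, hmax⟩ := exists_rotatableAt_forall_le hφ hψ hΔ h₁ h₂ h₁₂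
  have hpos : 0 < ψ x y - φ x y := by
    by_contra hle
    have := sum_nonpos (s := univ) fun (h : Idx L N) _ =>
      (hmax h.1.val h.2.val).trans (not_lt.1 hle)
    linarith [k.cast_nonneg (α := ℤ)]
  have h₃ : 3 ≤ ψ x y - φ x y := Int.le_of_dvd hpos (hΔ₃ x y).2
  refine ⟨_, hg, _, hφ.rotate hg, fun x' y' => ?_, ?_⟩
  · split_ifs with hc
    · have := hΔ.eq_of_intCast_eq (Prod.ext_iff.1 hc).1 (Prod.ext_iff.1 hc).2
      refine ⟨by linarith, ?_⟩
      rw [show ψ x' y' - (φ x' y' + 3) = (ψ x y - φ x y) - 3 by linarith]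
      exact dvd_sub (hΔ₃ x y).2 dvd_rfl
    · simpa using hΔ₃ x' y'
  · simp only [Int.cast_natCast, ZMod.natCast_zmod_val, Prod.mk.eta, sub_add_eq_sub_sub,
      sum_sub_distrib, sum_ite_eq', mem_univ, if_true, hsum]
    ring

theorem reflTransGen_elemMove_of_sum_eq [NeZero L] [NeZero N] {n1 n2 : ℕ} (hn1 : 0 < n1)
    (hn2 : 0 < n2) (hn : n1 + n2 < N * L) {M M' : Covering L N} {φ ψ : ℤ → ℤ → ℤ}
    (hM : M ∈ Omega L N n1 n2) (hM' : M' ∈ Omega L N n1 n2) (hφ : IsHeight M φ)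
    (hψ : IsHeight M' ψ) (hΔ₃ : ∀ x y, 0 ≤ ψ x y - φ x y ∧ 3 ∣ ψ x y - φ x y) (k : ℕ)
    (hsum : ∑ h : Idx L N, (ψ h.1.val h.2.val - φ h.1.val h.2.val) = 3 * k) :
    Relation.ReflTransGen (ElemMove L N n1 n2) M M' := by
  induction k generalizing M φ with
  | zero =>
    rw [eq_of_sum_eq_zero hφ hψ (isBiperiodic_sub_of_mem_Omega hM hM' hφ hψ)
      (fun x y => (hΔ₃ x y).1) (by simpa using hsum)]
  | succ k ih =>
    obtain ⟨g, hg, φ', hφ', hΔ₃', hsum'⟩ := exists_rotate_sum_eq hφ hψ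
      (isBiperiodic_sub_of_mem_Omega hM hM' hφ hψ) (hM.2.1 ▸ hn1) (hM.2.2 ▸ hn2)
      (by rw [hM.2.1, hM.2.2]; exact hn) hΔ₃ (k := k) (by push_cast at hsum; exact hsum)
    have hM₁ := hg.rotate_mem_Omega hM
    exact .head ⟨hM, hM₁, g, hg, rfl⟩ (ih hM₁ hφ' hΔ₃' hsum')

end Descent

/-- The periodized `q`-Whittaker Markov chain is irreducible on
`Ω_{L,N;n₁,n₂}`: any covering `η` can be taken to any covering `η'` by a finite chain of
elementary moves, each shifting a single vertical dimer by `+e₁` (a rotation of the three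
dimers around one hexagonal face), while remaining inside `Ω_{L,N;n₁,n₂}`. -/
theorem irreducible_on_Omega
    {L N : ℕ} [NeZero L] [NeZero N]
    (n1 n2 : ℕ) (hn1 : 0 < n1) (hn2 : 0 < n2) (hn : n1 + n2 < N * L)
    (η η' : Covering L N) (hη : η ∈ Omega L N n1 n2) (hη' : η' ∈ Omega L N n1 n2) :
    Relation.ReflTransGen (ElemMove L N n1 n2) η η' := by
  obtain ⟨φ, ψ, hφ, hψ, hΔ⟩ := exists_isHeight_nonneg_three_dvd hη.1 hη'.1
    (hη.2.1.trans hη'.2.1.symm) (hη.2.2.trans hη'.2.2.symm)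
  obtain ⟨k, hk⟩ := dvd_sum fun (h : Idx L N) _ => (hΔ h.1.val h.2.val).2
  lift k to ℕ using by
    have := sum_nonneg fun (h : Idx L N) (_ : h ∈ univ) => (hΔ h.1.val h.2.val).1
    linarith
  exact reflTransGen_elemMove_of_sum_eq hn1 hn2 hn hη hη' hφ hψ hΔ k hk

end HexDimers
end
end

section
/- Let X be a dimer covering of Λ_{L,N} with k1 > 0 vertical dimers per row and k2 > 0 north-west dimers per column, and let N_h, N_v be the horizontal and vertical winding numbers of the loop Γ obtained by following up-right neighbors of vertical dimers. Then N_h·k1 = N_v·k2. In particular, writing m1 = k1, the quantity m2 := m1·N_h/N_v is an integer, equal to k2, and it satisfies m1/L + m2/N < 1 whenever n1 + n2 < NL (with n1 = N·k1, n2 = L·k2). -/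
/-!
Dimer coverings (perfect matchings) of the hexagonal lattice `Λ_{L,N}` periodized with
period `L` in the `e₁` direction and period `N` in the `e₂` direction
(Corwin–Toninelli, "A (2+1)-dimensional growth process with explicit stationary measures").

Black vertices, white vertices and hexagonal faces are all indexed by
`(ℤ/Lℤ) × (ℤ/Nℤ)`.  The edge of type `j ∈ {0,1,2}` at the black vertex `b = (s,t)` joins
`b` to the white vertex `whiteEnd b j`; type `0` edges are the vertical ones ("particles"),
type `1` edges are the north-west oriented ones, type `2` edges are the remaining
(horizontal) ones.  A face `g = (s,t)` is bordered by the six edges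
`(s,t,0), (s-1,t,0), (s,t,1), (s,t-1,1), (s-1,t,2), (s,t-1,2)`; stepping from a face to an
adjacent face in direction `+e₁` crosses a vertical edge with the white vertex on the
right, stepping in direction `+e₂` crosses a north-west edge with the white vertex on the
left.
-/

open scoped Classical

noncomputable section

namespace HexDimers

variable {L N : ℕ}

/-- `F_p`: the horizontal distance from the particle (vertical dimer) `p` to its up-right
neighbour `p₆`, the first particle weakly to the right of `p` in the row above. -/
def Fdist (M : Covering L N) (p : Idx L N) : ℕ :=
  sInf {k : ℕ | M (p.1 + (k : ZMod L), p.2 + 1) = 0}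

/-- The map `p ↦ p₆` sending a particle to its up-right neighbour. -/
def stepUR (M : Covering L N) (p : Idx L N) : Idx L N :=
  (p.1 + (Fdist M p : ZMod L), p.2 + 1)

/-- Return time of the loop `Γ` of successive up-right neighbours started at `p`. -/
def retTime (M : Covering L N) (p : Idx L N) : ℕ :=
  sInf {t : ℕ | 0 < t ∧ (stepUR M)^[t] p = p}

/-- Vertical winding number `N_v` of the loop `Γ` started at `p`. -/
def windV (M : Covering L N) (p : Idx L N) : ℕ := retTime M p / N

/-- Horizontal winding number `N_h` of the loop `Γ` started at `p` (the total horizontal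
displacement along `Γ` divided by the horizontal period `L`). -/
def windH (M : Covering L N) (p : Idx L N) : ℕ :=
  (∑ i ∈ Finset.range (retTime M p), Fdist M ((stepUR M)^[i] p)) / L

/-!
The up-right neighbour map `stepUR` permutes the particles, so some `r > 0` is a common period
of all of them. Lifted to the universal cover, the trajectories of two particles of the same
row never cross, hence over `r` steps all particles advance by the same horizontal
displacement `W`. Summing over the `N k₁` particles, and using that a particle `q` is followed
in its row by exactly `Fdist M q` north-west dimers, gives `N k₁ W = r L k₂`; for the loop `Γ`
this reads `N k₁ · L N_h = L k₂ · N N_v`.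
-/

theorem le_of_forall_mul_le_add {a b c : ℕ} (h : ∀ m : ℕ, m * a ≤ c + m * b) : a ≤ b := by
  by_contra! hab
  nlinarith [h (c + 1)]

theorem card_filter_eq_card_mul_of_fiber_snd {α β : Type*} [Fintype α] [Fintype β]
    (P : α × β → Prop) [DecidablePred P] {k : ℕ}
    (h : ∀ t, (Finset.univ.filter fun s => P (s, t)).card = k) :
    (Finset.univ.filter P).card = Fintype.card β * k := by
  rw [Finset.card_filter, Fintype.sum_prod_type_right]
  simp_rw [← Finset.card_filter, h]
  simp

theorem card_filter_eq_card_mul_of_fiber_fst {α β : Type*} [Fintype α] [Fintype β]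
    (P : α × β → Prop) [DecidablePred P] {k : ℕ}
    (h : ∀ s, (Finset.univ.filter fun t => P (s, t)).card = k) :
    (Finset.univ.filter P).card = Fintype.card α * k := by
  rw [Finset.card_filter, Fintype.sum_prod_type]
  simp_rw [← Finset.card_filter, h]
  simp

section Covering

variable [NeZero L] [NeZero N] {M : Covering L N}

theorem IsCovering.white_covered (hM : IsCovering M) (u : ZMod L) (v : ZMod N) :
    M (u, v + 1) = 0 ∨ M (u + 1, v) = 1 ∨ M (u, v) = 2 := by
  obtain ⟨b, hb⟩ := (Finite.injective_iff_surjective.mp hM) (u, v + 1)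
  obtain ⟨s, t⟩ := b
  have h3 : ∀ x : Fin 3, x = 0 ∨ x = 1 ∨ x = 2 := by decide
  rcases h3 (M (s, t)) with h | h | h <;>
    simp only [h, whiteEnd, Matrix.cons_val_zero, Matrix.cons_val_one, Matrix.cons_val_two,
      Matrix.head_cons, Matrix.tail_cons, Prod.mk.injEq, add_left_inj,
      sub_eq_iff_eq_add] at hb <;>
    obtain ⟨rfl, rfl⟩ := hb <;> simp [h]

theorem IsCovering.eq_one_iff (hM : IsCovering M) (u : ZMod L) (v : ZMod N) :
    M (u + 1, v) = 1 ↔ M (u, v) ≠ 2 ∧ M (u, v + 1) ≠ 0 := by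
  refine ⟨fun h1 => ⟨fun h2 => ?_, fun h0 => ?_⟩, fun h => ?_⟩
  · have := @hM (u + 1, v) (u, v) (by simp [h1, h2, whiteEnd])
    simp_all
  · have := @hM (u + 1, v) (u, v + 1) (by simp [h1, h0, whiteEnd])
    simp_all
  · have := hM.white_covered u v
    tauto

end Covering

def HasParticleInEachRow (M : Covering L N) : Prop := ∀ v : ZMod N, ∃ s : ZMod L, M (s, v) = 0

section Fdist

variable {M : Covering L N}

theorem Fdist_le {q : Idx L N} {k : ℕ} (h : M (q.1 + k, q.2 + 1) = 0) : Fdist M q ≤ k :=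
  Nat.sInf_le h

theorem ne_zero_of_lt_Fdist {q : Idx L N} {k : ℕ} (hk : k < Fdist M q) :
    M (q.1 + k, q.2 + 1) ≠ 0 :=
  Nat.notMem_of_lt_sInf hk

variable [NeZero L] (hrows : HasParticleInEachRow M)
include hrows

theorem Fdist_spec (q : Idx L N) : M (q.1 + Fdist M q, q.2 + 1) = 0 := by
  obtain ⟨s, hs⟩ := hrows (q.2 + 1)
  exact Nat.sInf_mem (s := {k : ℕ | M (q.1 + k, q.2 + 1) = 0}) ⟨(s - q.1).val, by simpa⟩

theorem mapsTo_stepUR : Set.MapsTo (stepUR M) {q | M q = 0} {q | M q = 0} :=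
  fun q _ => Fdist_spec hrows q

theorem Fdist_le_add {q q' : Idx L N} {d : ℕ} (hrow : q.2 = q'.2) (hd : q'.1 = q.1 + d) :
    Fdist M q ≤ d + Fdist M q' :=
  Fdist_le (by simpa [hrow, hd, add_assoc] using Fdist_spec hrows q')

theorem Fdist_eq_succ {s : ZMod L} {v : ZMod N} (h : M (s, v + 1) ≠ 0) :
    Fdist M (s, v) = Fdist M (s + 1, v) + 1 := by
  obtain ⟨j, hj⟩ : ∃ j, Fdist M (s, v) = j + 1 :=
    Nat.exists_eq_succ_of_ne_zero fun h0 => h (by simpa [h0] using Fdist_spec hrows (s, v))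
  have hle : Fdist M (s + 1, v) ≤ j :=
    Fdist_le (by simpa [hj, add_assoc, add_comm (1 : ZMod L)] using Fdist_spec hrows (s, v))
  have hge := Fdist_le_add hrows (q := (s, v)) (q' := (s + 1, v)) (d := 1) rfl (by simp)
  omega

end Fdist

section Particles

variable [NeZero L] [NeZero N] {M : Covering L N}

theorem IsCovering.run (hM : IsCovering M) {q : Idx L N} (hq : M q = 0) {j : ℕ}
    (hj : j < Fdist M q) : M (q.1 + (j + 1 : ℕ), q.2) = 1 := by
  induction j with
  | zero => simpa [hM.eq_one_iff, hq] using ne_zero_of_lt_Fdist hj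
  | succ j ih =>
    rw [Nat.cast_succ, ← add_assoc, hM.eq_one_iff]
    exact ⟨by rw [ih (by omega)]; decide, ne_zero_of_lt_Fdist hj⟩

theorem IsCovering.injOn_stepUR (hM : IsCovering M) :
    Set.InjOn (stepUR M) {q | M q = 0} := by
  suffices ∀ q q' : Idx L N, M q = 0 → M q' = 0 → Fdist M q ≤ Fdist M q' →
      stepUR M q = stepUR M q' → q = q' from fun q hq q' hq' h =>
    (le_total (Fdist M q) (Fdist M q')).elim (this q q' hq hq' · h)
      fun hle => (this q' q hq' hq hle h.symm).symm
  rintro ⟨s, t⟩ ⟨s', t'⟩ hq hq' hle h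
  simp only [stepUR, Prod.mk.injEq, add_left_inj] at h
  obtain ⟨hs, rfl⟩ := h
  obtain ⟨j, hj⟩ := Nat.exists_eq_add_of_le hle
  cases j with
  | zero => simp_all
  | succ j =>
    have hs' : s = s' + (j + 1 : ℕ) := by
      rw [hj] at hs; push_cast at hs ⊢; linear_combination hs
    have hrun := hM.run hq' (j := j) (by omega)
    simp only [← hs', hq] at hrun
    exact absurd hrun (by decide)

def particlePerm (hM : IsCovering M) (hrows : HasParticleInEachRow M) :
    Equiv.Perm {q : Idx L N // M q = 0} :=
  Equiv.ofBijective ((mapsTo_stepUR hrows).restrict _ _ _)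
    (Finite.injective_iff_bijective.mp ((mapsTo_stepUR hrows).restrict_inj.mpr hM.injOn_stepUR))

variable (hM : IsCovering M) (hrows : HasParticleInEachRow M)
include hM hrows

theorem particlePerm_pow_apply (n : ℕ) (q : {q : Idx L N // M q = 0}) :
    ((particlePerm hM hrows ^ n) q : Idx L N) = (stepUR M)^[n] q := by
  induction n with
  | zero => rfl
  | succ n ih =>
    rw [pow_succ', Equiv.Perm.mul_apply, Function.iterate_succ_apply', ← ih]
    rfl

theorem exists_common_period : ∃ r, 0 < r ∧ ∀ q, M q = 0 → (stepUR M)^[r] q = q := by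
  set σ := particlePerm hM hrows
  refine ⟨orderOf σ, orderOf_pos σ, fun q hq => ?_⟩
  simpa [σ, pow_orderOf_eq_one] using (particlePerm_pow_apply hM hrows (orderOf σ) ⟨q, hq⟩).symm

end Particles

section Counting

variable [NeZero L] [NeZero N] {M : Covering L N}

/-- For a particle or a north-west dimer `b`, the number of north-west dimers that follow `b`
in its row before the run of north-west dimers containing `b` ends. -/
def runRemaining (M : Covering L N) (b : Idx L N) : ℕ := if M b = 2 then 0 else Fdist M b

theorem runRemaining_add (hM : IsCovering M) (hrows : HasParticleInEachRow M)
    (s : ZMod L) (v : ZMod N) :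
    runRemaining M (s, v) + (if M (s + 1, v) = 0 then Fdist M (s + 1, v) else 0) =
      runRemaining M (s + 1, v) + if M (s + 1, v) = 1 then 1 else 0 := by
  by_cases h1 : M (s + 1, v) = 1
  · obtain ⟨h2, h0⟩ := (hM.eq_one_iff s v).mp h1
    simp [runRemaining, h1, h2, Fdist_eq_succ hrows h0]
  · have hzero : runRemaining M (s, v) = 0 := by
      rw [hM.eq_one_iff, not_and_or, not_not, not_not] at h1
      rcases h1 with h2 | h0
      · simp [runRemaining, h2]
      · simpa [runRemaining] using fun _ => Fdist_le (q := (s, v)) (k := 0) (by simpa using h0)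
    have h3 : ∀ x : Fin 3, x ≠ 1 → x = 0 ∨ x = 2 := by decide
    rcases h3 _ h1 with h | h <;> rw [hzero] <;> simp [runRemaining, h]

theorem sum_Fdist_particles (hM : IsCovering M) (hrows : HasParticleInEachRow M) :
    ∑ b ∈ Finset.univ.filter (M · = 0), Fdist M b = (Finset.univ.filter (M · = 1)).card := by
  have shift (f : Idx L N → ℕ) : ∑ b : Idx L N, f (b.1 + 1, b.2) = ∑ b, f b :=
    Fintype.sum_equiv (Equiv.addRight (1, 0)) _ _ fun b => by congr 1; ext <;> simp
  -- `runRemaining_add` telescopes along each row.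
  have key := Finset.sum_congr (s₁ := Finset.univ) rfl
    fun (b : Idx L N) _ => runRemaining_add hM hrows b.1 b.2
  simp only [Finset.sum_add_distrib, Prod.mk.eta] at key
  rw [Finset.sum_filter, Finset.card_filter]
  have h0 := shift fun b => if M b = 0 then Fdist M b else 0
  have h1 := shift fun b => if M b = 1 then 1 else 0
  have h2 := shift (runRemaining M)
  omega

end Counting

section Displacement

variable {M : Covering L N}

def displacement (M : Covering L N) (n : ℕ) (q : Idx L N) : ℕ :=
  ∑ i ∈ Finset.range n, Fdist M ((stepUR M)^[i] q)

theorem displacement_one (q : Idx L N) : displacement M 1 q = Fdist M q := by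
  simp [displacement]

theorem displacement_add (m n : ℕ) (q : Idx L N) :
    displacement M (m + n) q = displacement M m q + displacement M n ((stepUR M)^[m] q) := by
  rw [displacement, Finset.sum_range_add]
  congr 1
  refine Finset.sum_congr rfl fun i _ => ?_
  rw [add_comm, Function.iterate_add_apply]

theorem displacement_mul {T : ℕ} {q : Idx L N} (hq : (stepUR M)^[T] q = q) (m : ℕ) :
    displacement M (T * m) q = m * displacement M T q := by
  induction m with
  | zero => simp [displacement]
  | succ m ih =>
    rw [Nat.mul_succ, displacement_add, ih, Function.iterate_mul, Function.iterate_fixed hq,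
      add_one_mul]

theorem iterate_stepUR_fst (n : ℕ) (q : Idx L N) :
    ((stepUR M)^[n] q).1 = q.1 + displacement M n q := by
  induction n with
  | zero => simp [displacement]
  | succ n ih =>
    rw [Function.iterate_succ_apply', stepUR, displacement, Finset.sum_range_succ, ← displacement]
    push_cast
    rw [ih, add_assoc]

theorem iterate_stepUR_snd (n : ℕ) (q : Idx L N) : ((stepUR M)^[n] q).2 = q.2 + n := by
  induction n with
  | zero => simp
  | succ n ih =>
    rw [Function.iterate_succ_apply', stepUR, ih]
    push_cast
    ring

end Displacement

section Trajectories

variable [NeZero L] {M : Covering L N} (hrows : HasParticleInEachRow M)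
include hrows

/-- Lifted to `ℤ`, the trajectory of a site `q'` lying `d ≤ L` to the right of `q` never crosses
the trajectory of `q` nor its translate by `L`. -/
theorem add_displacement_mem_Icc {q q' : Idx L N} {d : ℕ} (hd : d ≤ L) (hrow : q.2 = q'.2)
    (hpos : q'.1 = q.1 + d) (n : ℕ) :
    d + displacement M n q' ∈ Set.Icc (displacement M n q) (L + displacement M n q) := by
  induction n generalizing q q' d with
  | zero => simpa [displacement] using hd
  | succ n ih =>
    have h1 := Fdist_le_add hrows hrow hpos
    have h2 := Fdist_le_add hrows (d := L - d) hrow.symm (by simp [hpos, Nat.cast_sub hd])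
    have hstep := ih (q := stepUR M q) (q' := stepUR M q') (d := d + Fdist M q' - Fdist M q)
      (by omega) (by simp [stepUR, hrow])
      (by simp only [stepUR, hpos, Nat.cast_sub h1]; push_cast; ring)
    simp only [add_comm n 1, displacement_add, displacement_one, Function.iterate_one,
      Set.mem_Icc] at hstep ⊢
    omega

end Trajectories

theorem sum_displacement_particles [NeZero L] [NeZero N] {M : Covering L N}
    (hM : IsCovering M) (hrows : HasParticleInEachRow M) (n : ℕ) :
    ∑ q : {q : Idx L N // M q = 0}, displacement M n q =
      n * ∑ q : {q : Idx L N // M q = 0}, Fdist M q := by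
  simp only [displacement]
  rw [Finset.sum_comm]
  calc ∑ i ∈ Finset.range n, ∑ q : {q : Idx L N // M q = 0}, Fdist M ((stepUR M)^[i] q)
      = ∑ _i ∈ Finset.range n, ∑ q : {q : Idx L N // M q = 0}, Fdist M q :=
        Finset.sum_congr rfl fun i _ => by
          simpa only [particlePerm_pow_apply] using
            Equiv.sum_comp (particlePerm hM hrows ^ i) (fun q => Fdist M q)
    _ = n * ∑ q : {q : Idx L N // M q = 0}, Fdist M q := by simp

section Period

variable [NeZero L] {M : Covering L N} (hrows : HasParticleInEachRow M) {r : ℕ}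
  (hr : ∀ q, M q = 0 → (stepUR M)^[r] q = q)
include hrows hr

theorem displacement_iterate_of_period {q : Idx L N} (hq : M q = 0) (i : ℕ) :
    displacement M r ((stepUR M)^[i] q) = displacement M r q := by
  induction i with
  | zero => rfl
  | succ i ih =>
    have hqi : M ((stepUR M)^[i] q) = 0 := (mapsTo_stepUR hrows).iterate i hq
    have h := displacement_add (M := M) 1 r ((stepUR M)^[i] q)
    rw [add_comm, displacement_add, hr _ hqi, displacement_one, Function.iterate_one] at h
    rw [Function.iterate_succ_apply', ← ih]
    omega

theorem displacement_eq_of_snd_eq {q q' : Idx L N} (hq : M q = 0) (hq' : M q' = 0)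
    (hrow : q.2 = q'.2) : displacement M r q = displacement M r q' := by
  have hbound (m : ℕ) := add_displacement_mem_Icc hrows (ZMod.val_le (q'.1 - q.1)) hrow
    (by simp) (r * m)
  simp only [displacement_mul (hr q hq), displacement_mul (hr q' hq'), Set.mem_Icc] at hbound
  refine le_antisymm (le_of_forall_mul_le_add fun m => (hbound m).1)
    (le_of_forall_mul_le_add (c := L) fun m => ?_)
  have := hbound m
  omega

theorem displacement_eq_of_period [NeZero N] {q q' : Idx L N} (hq : M q = 0) (hq' : M q' = 0) :
    displacement M r q = displacement M r q' := by
  rw [← displacement_iterate_of_period hrows hr hq (q'.2 - q.2).val]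
  exact displacement_eq_of_snd_eq hrows hr ((mapsTo_stepUR hrows).iterate _ hq) hq'
    (by simp [iterate_stepUR_snd])

end Period

section Winding

variable {M : Covering L N} {p : Idx L N} {T : ℕ}

theorem dvd_of_iterate_stepUR_eq (h : (stepUR M)^[T] p = p) : N ∣ T := by
  have := iterate_stepUR_snd (M := M) T p
  rwa [h, left_eq_add, ZMod.natCast_eq_zero_iff] at this

theorem dvd_displacement_of_iterate_stepUR_eq (h : (stepUR M)^[T] p = p) :
    L ∣ displacement M T p := by
  have := iterate_stepUR_fst (M := M) T p
  rwa [h, left_eq_add, ZMod.natCast_eq_zero_iff] at this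

variable [NeZero L] [NeZero N] (hM : IsCovering M) (hrows : HasParticleInEachRow M)
include hM hrows

theorem retTime_spec (hp : M p = 0) :
    0 < retTime M p ∧ (stepUR M)^[retTime M p] p = p := by
  obtain ⟨r, hr0, hr⟩ := exists_common_period hM hrows
  exact Nat.sInf_mem (s := {t | 0 < t ∧ (stepUR M)^[t] p = p}) ⟨r, hr0, hr p hp⟩

theorem nVert_mul_displacement_retTime (hp : M p = 0) :
    nVert M * displacement M (retTime M p) p = nNW M * retTime M p := by
  obtain ⟨r, hr0, hr⟩ := exists_common_period hM hrows
  obtain ⟨-, hT⟩ := retTime_spec hM hrows hp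
  have hrT (q : Idx L N) (hq : M q = 0) : (stepUR M)^[r * retTime M p] q = q := by
    rw [Function.iterate_mul]
    exact Function.iterate_fixed (hr q hq) _
  have hsum := sum_displacement_particles hM hrows (r * retTime M p)
  rw [Finset.sum_congr rfl fun q _ => displacement_eq_of_period hrows hrT q.2 hp,
    ← Finset.sum_subtype (Finset.univ.filter (M · = 0)) (by simp) (Fdist M),
    sum_Fdist_particles hM hrows, Finset.sum_const, Finset.card_univ, Fintype.card_subtype,
    mul_comm r, displacement_mul hT, smul_eq_mul] at hsum
  refine Nat.eq_of_mul_eq_mul_left hr0 ?_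
  rw [nVert, nNW]
  linarith

end Winding

theorem winding_ratio_eq_k2_general
    {L N : ℕ} [NeZero L] [NeZero N]
    (k1 k2 : ℕ) (hk1 : 0 < k1)
    (M : Covering L N) (hM : IsCovering M)
    (hrow : ∀ t : ZMod N, (Finset.univ.filter fun s : ZMod L => M (s, t) = 0).card = k1)
    (hcol : ∀ s : ZMod L, (Finset.univ.filter fun t : ZMod N => M (s, t) = 1).card = k2)
    (p : Idx L N) (hp : M p = 0) :
    windH M p * k1 = windV M p * k2 ∧
    windV M p ∣ k1 * windH M p ∧
    k1 * windH M p / windV M p = k2 ∧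
    (N * k1 + L * k2 < N * L →
      k1 * N + (k1 * windH M p / windV M p) * L < L * N) := by
  have hrows : HasParticleInEachRow M := fun t => by
    obtain ⟨s, hs⟩ := Finset.card_pos.mp (hrow t ▸ hk1)
    exact ⟨s, (Finset.mem_filter.mp hs).2⟩
  obtain ⟨hT0, hT⟩ := retTime_spec hM hrows hp
  obtain ⟨nv, hnv⟩ := dvd_of_iterate_stepUR_eq hT
  obtain ⟨nh, hnh⟩ := dvd_displacement_of_iterate_stepUR_eq hT
  have hV : windV M p = nv := by rw [windV, hnv, Nat.mul_div_cancel_left _ (NeZero.pos N)]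
  have hH : windH M p = nh := by
    rw [windH, ← displacement, hnh, Nat.mul_div_cancel_left _ (NeZero.pos L)]
  have hkey := nVert_mul_displacement_retTime hM hrows hp
  rw [nVert, nNW, card_filter_eq_card_mul_of_fiber_snd _ hrow,
    card_filter_eq_card_mul_of_fiber_fst _ hcol, ZMod.card, ZMod.card, hnh, hnv] at hkey
  have hwind : k1 * nh = nv * k2 := Nat.eq_of_mul_eq_mul_left
    (Nat.mul_pos (NeZero.pos N) (NeZero.pos L)) (by linarith)
  have hnv0 : 0 < nv := Nat.pos_of_ne_zero fun h => by simp [h] at hnv; omega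
  rw [hV, hH, hwind, Nat.mul_div_cancel_left _ hnv0]
  exact ⟨by linarith, dvd_mul_right nv k2, rfl, fun h => by linarith⟩

/-- For a covering with `k₁ > 0` vertical dimers per row and `k₂ > 0`
north-west dimers per column, the winding numbers of the loop `Γ` of up-right neighbours
satisfy `N_h k₁ = N_v k₂`; in particular, with `m₁ = k₁`, the number
`m₂ := m₁ N_h / N_v` is an integer equal to `k₂`, and `m₁/L + m₂/N < 1` whenever
`n₁ + n₂ < NL` (with `n₁ = N k₁`, `n₂ = L k₂`). -/
theorem winding_ratio_eq_k2
    {L N : ℕ} [NeZero L] [NeZero N]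
    (k1 k2 : ℕ) (hk1 : 0 < k1) (hk2 : 0 < k2)
    (M : Covering L N) (hM : IsCovering M)
    (hrow : ∀ t : ZMod N, (Finset.univ.filter fun s : ZMod L => M (s, t) = 0).card = k1)
    (hcol : ∀ s : ZMod L, (Finset.univ.filter fun t : ZMod N => M (s, t) = 1).card = k2)
    (p : Idx L N) (hp : M p = 0) :
    windH M p * k1 = windV M p * k2 ∧
    windV M p ∣ k1 * windH M p ∧
    k1 * windH M p / windV M p = k2 ∧
    (N * k1 + L * k2 < N * L →
      k1 * N + (k1 * windH M p / windV M p) * L < L * N) :=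
  winding_ratio_eq_k2_general k1 k2 hk1 M hM hrow hcol p hp

end HexDimers
end
end

section
/- In any interlacing particle configuration on T_{L,N} with m1 particles per row, starting from any particle p and repeatedly moving to up-right neighbors (p ↦ p6) yields a path Γ that returns to the starting particle p and forms a simple loop: no particle along Γ is reached from two distinct particles. Moreover the horizontal and vertical winding numbers N_h, N_v of Γ do not depend on the chosen starting particle p. -/
/-!
Interlacing particle configurations on the discrete torus `T_{L,N}`,
the periodized `q`-Whittaker dynamics and its Gibbs measures
(Corwin–Toninelli, "A (2+1)-dimensional growth process with explicit
stationary measures").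
-/

open scoped Classical

noncomputable section

namespace QWhittaker

/-- Sites of the discrete torus `T_{L,N} = (ℤ/Lℤ) × (ℤ/Nℤ)`.
The first coordinate is the horizontal position, the second one is the row. -/
abbrev Site (L N : ℕ) := ZMod L × ZMod N

/-- A particle configuration: `η p = true` iff site `p` carries a particle. -/
abbrev Cfg (L N : ℕ) := Site L N → Bool

variable {L N : ℕ}

/-- `A_p`: horizontal distance minus one from `p` to its right neighbour `p₁` on the same row. -/
def dA (η : Cfg L N) (p : Site L N) : ℕ :=
  sInf {k : ℕ | 0 < k ∧ η (p.1 + (k : ZMod L), p.2) = true} - 1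

/-- `B_p`: horizontal distance minus one from `p` to its neighbour `p₂`
(the first particle strictly to the right of `p` in the row below). -/
def dB (η : Cfg L N) (p : Site L N) : ℕ :=
  sInf {k : ℕ | 0 < k ∧ η (p.1 + (k : ZMod L), p.2 - 1) = true} - 1

/-- `C_p`: horizontal distance from `p` to its neighbour `p₃`
(the first particle weakly to the left of `p` in the row below); may be `0`. -/
def dC (η : Cfg L N) (p : Site L N) : ℕ :=
  sInf {k : ℕ | η (p.1 - (k : ZMod L), p.2 - 1) = true}

/-- `D_p`: horizontal distance minus one from `p` to its left neighbour `p₄` on the same row. -/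
def dD (η : Cfg L N) (p : Site L N) : ℕ :=
  sInf {k : ℕ | 0 < k ∧ η (p.1 - (k : ZMod L), p.2) = true} - 1

/-- `E_p`: horizontal distance minus one from `p` to its neighbour `p₅`
(the first particle strictly to the left of `p` in the row above). -/
def dE (η : Cfg L N) (p : Site L N) : ℕ :=
  sInf {k : ℕ | 0 < k ∧ η (p.1 - (k : ZMod L), p.2 + 1) = true} - 1

/-- `F_p`: horizontal distance from `p` to its up-right neighbour `p₆`
(the first particle weakly to the right of `p` in the row above); may be `0`. -/
def dF (η : Cfg L N) (p : Site L N) : ℕ :=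
  sInf {k : ℕ | η (p.1 + (k : ZMod L), p.2 + 1) = true}

/-- Interlaced configurations with `m1` particles per row: every row carries exactly `m1`
particles and, for every particle `p`, the row below contains exactly one particle with
horizontal position in `{x_p+1, …, x_{p₁}}` and exactly one with horizontal position in
`{x_{p₄}+1, …, x_p}`. -/
def Interlaced [NeZero L] [NeZero N] (m1 : ℕ) (η : Cfg L N) : Prop :=
  (∀ t : ZMod N, (Finset.univ.filter fun s : ZMod L => η (s, t) = true).card = m1) ∧
  ∀ p : Site L N, η p = true →
    ((Finset.Icc 1 (dA η p + 1)).filter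
        fun k : ℕ => η (p.1 + (k : ZMod L), p.2 - 1) = true).card = 1 ∧
    ((Finset.Icc 0 (dD η p)).filter
        fun k : ℕ => η (p.1 - (k : ZMod L), p.2 - 1) = true).card = 1

/-- The map `p ↦ p₆` sending a particle to its up-right neighbour. -/
def stepUR (η : Cfg L N) (p : Site L N) : Site L N :=
  (p.1 + (dF η p : ZMod L), p.2 + 1)

/-- Return time of the loop `Γ` of successive up-right neighbours started at `p`. -/
def retTime (η : Cfg L N) (p : Site L N) : ℕ :=
  sInf {t : ℕ | 0 < t ∧ (stepUR η)^[t] p = p}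

/-- Vertical winding number `N_v` of the loop `Γ` started at `p`. -/
def windV (η : Cfg L N) (p : Site L N) : ℕ := retTime η p / N

/-- Horizontal winding number `N_h` of the loop `Γ` started at `p` (the total horizontal
displacement along `Γ` divided by the horizontal period `L`). -/
def windH (η : Cfg L N) (p : Site L N) : ℕ :=
  (∑ i ∈ Finset.range (retTime η p), dF η ((stepUR η)^[i] p)) / L

/-- The sector `Ω_{L,N;m1,m2}`: interlaced configurations with `m1` particles per row whose
winding numbers satisfy `m1 · N_h = m2 · N_v`, i.e. `m2 = m1 · N_h / N_v`. -/
def InSector [NeZero L] [NeZero N] (m1 m2 : ℕ) (η : Cfg L N) : Prop :=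
  Interlaced m1 η ∧ ∀ p : Site L N, η p = true → m1 * windH η p = m2 * windV η p

/-- The particles of a configuration, as a finite set of sites. -/
def particles [NeZero L] [NeZero N] (η : Cfg L N) : Finset (Site L N) :=
  Finset.univ.filter fun p => η p = true

/-- The `q`-Pochhammer symbol `(q;q)_n = (1-q)(1-q²)⋯(1-qⁿ)`. -/
def qPoch (q : ℝ) (n : ℕ) : ℝ := ∏ i ∈ Finset.range n, (1 - q ^ (i + 1))

/-- Unnormalised Gibbs weight `∏_p a_{r(p)}^{C_p} (q;q)_{A_p} / ((q;q)_{B_p} (q;q)_{C_p})`. -/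
def weight [NeZero L] [NeZero N] (q : ℝ) (a : ZMod N → ℝ) (η : Cfg L N) : ℝ :=
  ∏ p ∈ particles η,
    a p.2 ^ dC η p * qPoch q (dA η p) / (qPoch q (dB η p) * qPoch q (dC η p))

/-- The sector `Ω_{L,N;m1,m2}` as a finite set of configurations. -/
def sectorFinset (L N : ℕ) [NeZero L] [NeZero N] (m1 m2 : ℕ) : Finset (Cfg L N) :=
  Finset.univ.filter fun σ => InSector m1 m2 σ

/-- The normalised Gibbs probability measure `π = π_{L,N;m1,m2}` on the sector. -/
def gibbs [NeZero L] [NeZero N] (q : ℝ) (a : ZMod N → ℝ) (m1 m2 : ℕ) (σ : Cfg L N) : ℝ :=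
  weight q a σ / ∑ τ ∈ sectorFinset L N m1 m2, weight q a τ

/-- `V_p⁺`: the particle `p` together with all particles reachable from `p` along upward
edges (an upward edge joins `r` to its up-right neighbour `r₆` whenever `F_r = 0`). -/
def Vplus (η : Cfg L N) (p : Site L N) : Set (Site L N) :=
  {z | ∃ j : ℕ, z = (p.1, p.2 + (j : ZMod N)) ∧
    ∀ i : ℕ, i ≤ j → η (p.1, p.2 + (i : ZMod N)) = true}

/-- `V_p⁻`: the particle `p` together with all particles reachable from `p` along downward
edges (a downward edge joins `r` to its neighbour `r₃` whenever `C_r = 0`). -/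
def Vminus (η : Cfg L N) (p : Site L N) : Set (Site L N) :=
  {z | ∃ j : ℕ, z = (p.1, p.2 - (j : ZMod N)) ∧
    ∀ i : ℕ, i ≤ j → η (p.1, p.2 - (i : ZMod N)) = true}

/-- The configuration obtained from `η` by shifting every particle of `V_p⁺` by `+e₁`. -/
def moveR (η : Cfg L N) (p : Site L N) : Cfg L N := fun z =>
  decide ((η z = true ∧ z ∉ Vplus η p) ∨ (z.1 - 1, z.2) ∈ Vplus η p)

/-- The configuration obtained from `η` by shifting every particle of `V_p⁻` by `-e₁`. -/
def moveL (η : Cfg L N) (p : Site L N) : Cfg L N := fun z =>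
  decide ((η z = true ∧ z ∉ Vminus η p) ∨ (z.1 + 1, z.2) ∈ Vminus η p)

/-- The number of downward edges below `p` in `V_p⁻`. -/
def depth (η : Cfg L N) (p : Site L N) : ℕ :=
  sInf {j : ℕ | η (p.1, p.2 - ((j + 1 : ℕ) : ZMod N)) = false}

/-- `r_p⁻`, the lowest particle of `V_p⁻`. -/
def rbot (η : Cfg L N) (p : Site L N) : Site L N :=
  (p.1, p.2 - (depth η p : ZMod N))

/-- The number of upward edges above `p` in `V_p⁺`. -/
def height (η : Cfg L N) (p : Site L N) : ℕ :=
  sInf {j : ℕ | η (p.1, p.2 + ((j + 1 : ℕ) : ZMod N)) = false}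

/-- `r_p⁺`, the highest particle of `V_p⁺`. -/
def rtop (η : Cfg L N) (p : Site L N) : Site L N :=
  (p.1, p.2 + (height η p : ZMod N))

/-- The jump rate `a_{r(p)} (1-q^{B_p})(1-q^{D_p+1})/(1-q^{C_p+1})` of the update
shifting the family `V_p⁺` by `+e₁`. -/
def rate (q : ℝ) (a : ZMod N → ℝ) (η : Cfg L N) (p : Site L N) : ℝ :=
  a p.2 * (1 - q ^ dB η p) * (1 - q ^ (dD η p + 1)) / (1 - q ^ (dC η p + 1))

/-- The generator `𝓛` of the periodized `q`-Whittaker dynamics: for `σ ≠ η`, `𝓛(η,σ)` is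
the total rate of the updates taking `η` to `σ`, and the diagonal makes row sums vanish. -/
def gen [NeZero L] [NeZero N] (q : ℝ) (a : ZMod N → ℝ) (η σ : Cfg L N) : ℝ :=
  if σ = η then -∑ p ∈ particles η, rate q a η p
  else ∑ p ∈ (particles η).filter (fun p => moveR η p = σ), rate q a η p

end QWhittaker

/-!
The up-right map `p ↦ p₆` sends particles to particles, and it is injective on them: by the
second interlacing condition `p` is the only particle of the row below in the window
`{x_{p₆} - D_{p₆}, …, x_{p₆}}`. So it permutes the finitely many particles, every orbit is a
simple loop, and `retTime` is the minimal period. The up-right map commutes with the right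
neighbour map `p ↦ p₁` (the interlacing conditions force `(p₁)₆ = (p₆)₁`), which is injective
on particles as well, and any particle is reached from any other by going up and then right.
The minimal period is invariant under injective maps commuting with the dynamics, and along
`p ↦ p₁` the total horizontal displacement of the loop changes by the telescoping sum of
`F_{p₁} + (A_p + 1) = F_p + (A_{p₆} + 1)`.
-/

open Function Set

theorem Set.MapsTo.mem_periodicPts_of_injOn {α : Type*} {f : α → α} {s : Set α} [Finite s]
    (hf : MapsTo f s s) (hinj : InjOn f s) {x : α} (hx : x ∈ s) : x ∈ periodicPts f :=
  Semiconj.mapsTo_periodicPts (g := Subtype.val) (fun _ => rfl)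
    ((hf.restrict_inj.2 hinj).mem_periodicPts ⟨x, hx⟩)

theorem Set.MapsTo.apply_iterate_eq {α β : Type*} {g : α → α} {s : Set α} (hg : MapsTo g s s)
    {f : α → β} (hf : ∀ x ∈ s, f (g x) = f x) (n : ℕ) {x : α} (hx : x ∈ s) :
    f (g^[n] x) = f x := by
  induction n with
  | zero => rfl
  | succ n ih => rw [iterate_succ_apply', hf _ (hg.iterate n hx), ih]

theorem Set.MapsTo.iterate_apply_comm {α : Type*} {f g : α → α} {s : Set α} (hf : MapsTo f s s)
    (hcomm : ∀ x ∈ s, g (f x) = f (g x)) (n : ℕ) {x : α} (hx : x ∈ s) :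
    g (f^[n] x) = f^[n] (g x) := by
  induction n with
  | zero => rfl
  | succ n ih => rw [iterate_succ_apply', hcomm _ (hf.iterate n hx), ih, iterate_succ_apply']

theorem Set.InjOn.minimalPeriod_apply {α : Type*} {f g : α → α} {s : Set α} (hg : InjOn g s)
    (hf : MapsTo f s s) (hcomm : ∀ x ∈ s, g (f x) = f (g x)) {x : α} (hx : x ∈ s) :
    minimalPeriod f (g x) = minimalPeriod f x :=
  minimalPeriod_eq_minimalPeriod_iff.2 fun n => by
    simp only [IsPeriodicPt, IsFixedPt]
    rw [← hf.iterate_apply_comm hcomm n hx]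
    exact hg.eq_iff (hf.iterate n hx) hx

theorem Finset.sum_range_eq_of_add_eq_add_succ {M : Type*} [AddCancelCommMonoid M]
    {x a b : ℕ → M} {n : ℕ} (h : ∀ i, x i + b i = a i + b (i + 1)) (hb : b n = b 0) :
    ∑ i ∈ range n, x i = ∑ i ∈ range n, a i := by
  have hshift : ∑ i ∈ range n, b (i + 1) = ∑ i ∈ range n, b i :=
    add_right_cancel (b := b 0) (by rw [← sum_range_succ', sum_range_succ, hb])
  refine add_right_cancel (b := ∑ i ∈ range n, b i) ?_
  calc ∑ i ∈ range n, x i + ∑ i ∈ range n, b i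
      = ∑ i ∈ range n, (a i + b (i + 1)) := by
        rw [← sum_add_distrib]; exact sum_congr rfl fun i _ => h i
    _ = ∑ i ∈ range n, a i + ∑ i ∈ range n, b i := by rw [sum_add_distrib, hshift]

theorem Nat.sInf_pos_sub_one_add_one {P : ℕ → Prop} (h : {k | 0 < k ∧ P k}.Nonempty) :
    sInf {k | 0 < k ∧ P k} - 1 + 1 = sInf {k | 0 < k ∧ P k} :=
  Nat.sub_add_cancel (Nat.sInf_mem h).1

namespace QWhittaker

variable {L N m1 : ℕ} {η : Cfg L N}

/-- `gapR η p = A_p + 1` is the distance from `p` to its right neighbour `p₁ = stepR η p`. -/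
def gapR (η : Cfg L N) (p : Site L N) : ℕ := dA η p + 1

def stepR (η : Cfg L N) (p : Site L N) : Site L N := (p.1 + (gapR η p : ZMod L), p.2)

theorem not_particle_of_lt_dF {p : Site L N} {k : ℕ} (hlt : k < dF η p) :
    η (p.1 + (k : ZMod L), p.2 + 1) ≠ true :=
  fun h => Nat.notMem_of_lt_sInf hlt h

theorem dF_eq {p : Site L N} {k : ℕ} (hk : η (p.1 + (k : ZMod L), p.2 + 1) = true)
    (hmin : ∀ j < k, η (p.1 + (j : ZMod L), p.2 + 1) ≠ true) : dF η p = k :=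
  IsLeast.csInf_eq ⟨hk, fun j hj => not_lt.1 fun h => hmin j h hj⟩

section Neighbours

variable [NeZero L] {p q : Site L N}

theorem nonempty_pos_particle_add (hp : η p = true) :
    {k : ℕ | 0 < k ∧ η (p.1 + (k : ZMod L), p.2) = true}.Nonempty :=
  ⟨L, NeZero.pos L, by simpa using hp⟩

theorem nonempty_pos_particle_sub (hp : η p = true) :
    {k : ℕ | 0 < k ∧ η (p.1 - (k : ZMod L), p.2) = true}.Nonempty :=
  ⟨L, NeZero.pos L, by simpa using hp⟩

theorem gapR_eq_sInf (hp : η p = true) :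
    gapR η p = sInf {k : ℕ | 0 < k ∧ η (p.1 + (k : ZMod L), p.2) = true} :=
  Nat.sInf_pos_sub_one_add_one (nonempty_pos_particle_add hp)

theorem dD_add_one_eq_sInf (hp : η p = true) :
    dD η p + 1 = sInf {k : ℕ | 0 < k ∧ η (p.1 - (k : ZMod L), p.2) = true} :=
  Nat.sInf_pos_sub_one_add_one (nonempty_pos_particle_sub hp)

theorem stepR_particle (hp : η p = true) : η (stepR η p) = true := by
  have h := Nat.sInf_mem (nonempty_pos_particle_add hp)
  rw [← gapR_eq_sInf hp] at h
  exact h.2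

theorem particle_sub_dD_add_one (hp : η p = true) :
    η (p.1 - ((dD η p + 1 : ℕ) : ZMod L), p.2) = true := by
  have h := Nat.sInf_mem (nonempty_pos_particle_sub hp)
  rw [← dD_add_one_eq_sInf hp] at h
  exact h.2

theorem not_particle_of_lt_gapR (hp : η p = true) {k : ℕ} (hk : 0 < k) (hlt : k < gapR η p) :
    η (p.1 + (k : ZMod L), p.2) ≠ true :=
  fun h => Nat.notMem_of_lt_sInf (gapR_eq_sInf hp ▸ hlt) (show _ ∧ _ from ⟨hk, h⟩)

theorem dD_stepR_add_one (hp : η p = true) : dD η (stepR η p) + 1 = gapR η p := by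
  rw [dD_add_one_eq_sInf (stepR_particle hp)]
  refine IsLeast.csInf_eq ⟨⟨Nat.succ_pos _, by simpa [stepR] using hp⟩, fun k ⟨hk, hkη⟩ => ?_⟩
  by_contra! hlt
  refine not_particle_of_lt_gapR hp (k := gapR η p - k) (by omega) (by omega) ?_
  rw [Nat.cast_sub hlt.le]
  simpa [stepR, add_sub_assoc] using hkη

theorem mapsTo_stepR : MapsTo (stepR η) {p | η p = true} {p | η p = true} :=
  fun _ => stepR_particle

theorem stepR_injOn : InjOn (stepR η) {p | η p = true} := by
  intro p hp q hq h
  have hgap : gapR η p = gapR η q := by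
    rw [← dD_stepR_add_one hp, ← dD_stepR_add_one hq, h]
  simp only [stepR, Prod.mk.injEq, hgap, add_left_inj] at h
  exact Prod.ext h.1 h.2

theorem dF_le_dD_stepUR (hr : η (stepUR η p) = true) : dF η p ≤ dD η (stepUR η p) := by
  by_contra! hlt
  refine not_particle_of_lt_dF (η := η) (p := p)
    (k := dF η p - (dD η (stepUR η p) + 1)) (by omega) ?_
  have hx : p.1 + ((dF η p - (dD η (stepUR η p) + 1) : ℕ) : ZMod L)
      = (stepUR η p).1 - ((dD η (stepUR η p) + 1 : ℕ) : ZMod L) := by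
    rw [Nat.cast_sub hlt, stepUR]
    ring
  rw [hx]
  exact particle_sub_dD_add_one hr

theorem exists_iterate_stepR_eq (hp : η p = true) (hq : η q = true) (hrow : p.2 = q.2) :
    ∃ n : ℕ, (stepR η)^[n] p = q := by
  induction hd : (q.1 - p.1).val using Nat.strong_induction_on generalizing p with
  | _ d ih =>
  rcases Nat.eq_zero_or_pos d with rfl | hd0
  · exact ⟨0, Prod.ext (sub_eq_zero.1 ((ZMod.val_eq_zero _).1 hd)).symm hrow⟩
  have hqp : q.1 = p.1 + (d : ZMod L) := by rw [← hd, ZMod.natCast_zmod_val]; ring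
  have hle : gapR η p ≤ d := by
    by_contra! hlt
    refine not_particle_of_lt_gapR hp hd0 hlt ?_
    rw [← hqp, hrow]
    exact hq
  have hd' : (q.1 - (stepR η p).1).val = d - gapR η p := by
    have hlt : d < L := hd ▸ ZMod.val_lt _
    rw [show q.1 - (stepR η p).1 = ((d - gapR η p : ℕ) : ZMod L) by
      rw [Nat.cast_sub hle, hqp, stepR]; ring]
    exact ZMod.val_cast_of_lt (by omega)
  obtain ⟨n, hn⟩ := ih _ (by have : 0 < gapR η p := Nat.succ_pos _; omega)
    (stepR_particle hp) hrow hd'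
  exact ⟨n + 1, hn⟩

end Neighbours

theorem iterate_stepUR_snd (p : Site L N) (n : ℕ) : ((stepUR η)^[n] p).2 = p.2 + n := by
  induction n with
  | zero => simp
  | succ n ih =>
    rw [iterate_succ_apply', show ((stepUR η) _).2 = _ + 1 from rfl, ih]
    push_cast
    ring

theorem retTime_eq_minimalPeriod (η : Cfg L N) (p : Site L N) :
    retTime η p = minimalPeriod (stepUR η) p :=
  minimalPeriod_eq_sInf_n_pos_IsPeriodicPt.symm

theorem iterate_retTime (η : Cfg L N) (p : Site L N) : (stepUR η)^[retTime η p] p = p := by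
  rw [retTime_eq_minimalPeriod]
  exact iterate_minimalPeriod

section Interlacing

variable [NeZero L] [NeZero N] {p q r : Site L N}

theorem Interlaced.pos_of_particle (hη : Interlaced m1 η) (hp : η p = true) : 0 < m1 :=
  hη.1 p.2 ▸ Finset.card_pos.2 ⟨p.1, by simpa using hp⟩

theorem Interlaced.nonempty_particle_above (hη : Interlaced m1 η) (hm : 0 < m1)
    (p : Site L N) : {k : ℕ | η (p.1 + (k : ZMod L), p.2 + 1) = true}.Nonempty := by
  obtain ⟨s, hs⟩ := Finset.card_pos.1 ((hη.1 (p.2 + 1)).symm ▸ hm)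
  exact ⟨(s - p.1).val, by simpa using hs⟩

theorem Interlaced.stepUR_particle (hη : Interlaced m1 η) (hm : 0 < m1) (p : Site L N) :
    η (stepUR η p) = true :=
  Nat.sInf_mem (hη.nonempty_particle_above hm p)

theorem Interlaced.mapsTo_stepUR (hη : Interlaced m1 η) (hm : 0 < m1) :
    MapsTo (stepUR η) {p | η p = true} {p | η p = true} :=
  fun p _ => hη.stepUR_particle hm p

theorem Interlaced.eq_of_particles_lowerLeft (hη : Interlaced m1 η) (hr : η r = true)
    {j k : ℕ} (hj : j ≤ dD η r) (hk : k ≤ dD η r)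
    (hjη : η (r.1 - (j : ZMod L), r.2 - 1) = true)
    (hkη : η (r.1 - (k : ZMod L), r.2 - 1) = true) : j = k :=
  Finset.card_le_one.1 (hη.2 r hr).2.le j (by simp [hj, hjη]) k (by simp [hk, hkη])

theorem Interlaced.exists_particle_lowerRight (hη : Interlaced m1 η) (hr : η r = true) :
    ∃ k : ℕ, 0 < k ∧ k ≤ gapR η r ∧ η (r.1 + (k : ZMod L), r.2 - 1) = true := by
  obtain ⟨k, hk⟩ := Finset.card_pos.1 ((hη.2 r hr).1.symm ▸ Nat.one_pos)
  simp only [Finset.mem_filter, Finset.mem_Icc] at hk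
  exact ⟨k, hk.1.1, hk.1.2, hk.2⟩

theorem Interlaced.injOn_stepUR (hη : Interlaced m1 η) (hm : 0 < m1) :
    InjOn (stepUR η) {p | η p = true} := by
  intro p hp q hq h
  have hr := hη.stepUR_particle hm p
  have hF : dF η p = dF η q := by
    refine hη.eq_of_particles_lowerLeft hr (dF_le_dD_stepUR hr)
      (by rw [h]; exact dF_le_dD_stepUR (hη.stepUR_particle hm q)) ?_ ?_
    · simpa [stepUR] using hp
    · rw [h]
      simpa [stepUR] using hq
  simp only [stepUR, Prod.mk.injEq, hF, add_left_inj] at h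
  exact Prod.ext h.1 h.2

theorem Interlaced.dF_lt_gapR (hη : Interlaced m1 η) (hm : 0 < m1) (hp : η p = true) :
    dF η p < gapR η p := by
  by_contra! hle
  have hr := hη.stepUR_particle hm p
  have hx : (stepUR η p).1 - ((dF η p - gapR η p : ℕ) : ZMod L) = (stepR η p).1 := by
    rw [Nat.cast_sub hle, stepUR, stepR]
    ring
  have h := hη.eq_of_particles_lowerLeft hr (dF_le_dD_stepUR hr)
    ((Nat.sub_le _ (gapR η p)).trans (dF_le_dD_stepUR hr)) (by simpa [stepUR] using hp)
    (by rw [hx]; simpa [stepUR, stepR] using stepR_particle hp)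
  have : 0 < gapR η p := Nat.succ_pos _
  omega

theorem Interlaced.gapR_le_dF_add_gapR_stepUR (hη : Interlaced m1 η) (hm : 0 < m1)
    (hp : η p = true) : gapR η p ≤ dF η p + gapR η (stepUR η p) := by
  obtain ⟨k, hk0, hk, hkη⟩ := hη.exists_particle_lowerRight (hη.stepUR_particle hm p)
  by_contra! hlt
  refine not_particle_of_lt_gapR hp (k := dF η p + k) (by omega) (by omega) ?_
  have hx : p.1 + ((dF η p + k : ℕ) : ZMod L) = (stepUR η p).1 + (k : ZMod L) := by
    rw [stepUR]
    push_cast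
    ring
  rw [hx]
  simpa [stepUR] using hkη

theorem Interlaced.dF_stepR_add_gapR (hη : Interlaced m1 η) (hm : 0 < m1) (hp : η p = true) :
    dF η (stepR η p) + gapR η p = dF η p + gapR η (stepUR η p) := by
  have hle := hη.gapR_le_dF_add_gapR_stepUR hm hp
  have hlt := hη.dF_lt_gapR hm hp
  have hr := hη.stepUR_particle hm p
  suffices dF η (stepR η p) = dF η p + gapR η (stepUR η p) - gapR η p by omega
  refine dF_eq ?_ fun j hj hjη => ?_
  · have hx : (stepR η p).1 + ((dF η p + gapR η (stepUR η p) - gapR η p : ℕ) : ZMod L)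
        = (stepR η (stepUR η p)).1 := by
      rw [Nat.cast_sub hle, stepR, stepR, stepUR]
      push_cast
      ring
    rw [hx]
    exact stepR_particle hr
  · refine not_particle_of_lt_gapR hr (k := gapR η p + j - dF η p) (by omega) (by omega) ?_
    have hx : (stepUR η p).1 + ((gapR η p + j - dF η p : ℕ) : ZMod L)
        = (stepR η p).1 + (j : ZMod L) := by
      rw [Nat.cast_sub (by omega), stepR, stepUR]
      push_cast
      ring
    rw [hx]
    exact hjη

theorem Interlaced.stepUR_stepR (hη : Interlaced m1 η) (hm : 0 < m1) (hp : η p = true) :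
    stepUR η (stepR η p) = stepR η (stepUR η p) := by
  have h := congrArg (Nat.cast : ℕ → ZMod L) (hη.dF_stepR_add_gapR hm hp)
  push_cast at h
  refine Prod.ext ?_ rfl
  show p.1 + (gapR η p : ZMod L) + (dF η (stepR η p) : ZMod L)
    = p.1 + (dF η p : ZMod L) + (gapR η (stepUR η p) : ZMod L)
  linear_combination h

theorem Interlaced.mem_periodicPts (hη : Interlaced m1 η) (hm : 0 < m1) (hp : η p = true) :
    p ∈ periodicPts (stepUR η) :=
  (hη.mapsTo_stepUR hm).mem_periodicPts_of_injOn (hη.injOn_stepUR hm) hp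

theorem Interlaced.retTime_stepUR (hη : Interlaced m1 η) (hm : 0 < m1) (hp : η p = true) :
    retTime η (stepUR η p) = retTime η p := by
  simp only [retTime_eq_minimalPeriod, minimalPeriod_apply (hη.mem_periodicPts hm hp)]

theorem Interlaced.retTime_stepR (hη : Interlaced m1 η) (hm : 0 < m1) (hp : η p = true) :
    retTime η (stepR η p) = retTime η p := by
  simp only [retTime_eq_minimalPeriod]
  exact stepR_injOn.minimalPeriod_apply (hη.mapsTo_stepUR hm)
    (fun q hq => (hη.stepUR_stepR hm hq).symm) hp

theorem Interlaced.windH_stepUR (hη : Interlaced m1 η) (hm : 0 < m1) (hp : η p = true) :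
    windH η (stepUR η p) = windH η p := by
  unfold windH
  rw [hη.retTime_stepUR hm hp]
  congr 1
  refine Finset.sum_range_eq_of_add_eq_add_succ (b := fun i => dF η ((stepUR η)^[i] p))
    (fun i => ?_) (by simp only [iterate_retTime, iterate_zero_apply])
  rw [← iterate_succ_apply, add_comm]

theorem Interlaced.windH_stepR (hη : Interlaced m1 η) (hm : 0 < m1) (hp : η p = true) :
    windH η (stepR η p) = windH η p := by
  unfold windH
  rw [hη.retTime_stepR hm hp]
  congr 1
  refine Finset.sum_range_eq_of_add_eq_add_succ (b := fun i => gapR η ((stepUR η)^[i] p))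
    (fun i => ?_) (by simp only [iterate_retTime, iterate_zero_apply])
  rw [← (hη.mapsTo_stepUR hm).iterate_apply_comm (fun q hq => (hη.stepUR_stepR hm hq).symm) i hp,
    iterate_succ_apply']
  exact hη.dF_stepR_add_gapR hm ((hη.mapsTo_stepUR hm).iterate i hp)

theorem Interlaced.apply_eq_of_stepUR_stepR_invariant {α : Type*} (hη : Interlaced m1 η)
    (hm : 0 < m1) (f : Site L N → α) (hUR : ∀ q, η q = true → f (stepUR η q) = f q)
    (hR : ∀ q, η q = true → f (stepR η q) = f q) (hp : η p = true) (hq : η q = true) :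
    f q = f p := by
  set p' := (stepUR η)^[(q.2 - p.2).val] p
  have hp' : η p' = true := (hη.mapsTo_stepUR hm).iterate _ hp
  obtain ⟨n, hn⟩ := exists_iterate_stepR_eq hp' hq (by simp [p', iterate_stepUR_snd])
  rw [← hn, mapsTo_stepR.apply_iterate_eq hR n hp',
    (hη.mapsTo_stepUR hm).apply_iterate_eq hUR _ hp]

end Interlacing

theorem upRight_loop_simple_winding_independent_general
    {L N : ℕ} [NeZero L] [NeZero N]
    (m1 : ℕ)
    (η : Cfg L N) (hη : Interlaced m1 η)
    (p : Site L N) (hp : η p = true) :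
    (∃ t : ℕ, 0 < t ∧ (stepUR η)^[t] p = p) ∧
    (∀ i j : ℕ, i < retTime η p → j < retTime η p →
      (stepUR η)^[i] p = (stepUR η)^[j] p → i = j) ∧
    (∀ p' : Site L N, η p' = true →
      windH η p' = windH η p ∧ windV η p' = windV η p) := by
  have hm : 0 < m1 := hη.pos_of_particle hp
  refine ⟨⟨retTime η p, ?_, iterate_retTime η p⟩, fun i j hi hj => ?_, fun p' hp' => ?_⟩
  · rw [retTime_eq_minimalPeriod]
    exact minimalPeriod_pos_of_mem_periodicPts (hη.mem_periodicPts hm hp)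
  · rw [retTime_eq_minimalPeriod] at hi hj
    exact (iterate_eq_iterate_iff_of_lt_minimalPeriod hi hj).1
  · refine Prod.ext_iff.1 (hη.apply_eq_of_stepUR_stepR_invariant hm
      (fun q => (windH η q, windV η q)) (fun q hq => ?_) (fun q hq => ?_) hp hp')
    · simp only [windV, hη.windH_stepUR hm hq, hη.retTime_stepUR hm hq]
    · simp only [windV, hη.windH_stepR hm hq, hη.retTime_stepR hm hq]

/-- Starting from any particle `p` and repeatedly taking up-right
neighbours yields a path `Γ` that returns to `p` and forms a simple loop, and the winding
numbers of `Γ` do not depend on the starting particle. -/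
theorem upRight_loop_simple_winding_independent
    {L N : ℕ} [NeZero L] [NeZero N] (hL : 2 ≤ L) (hN : 2 ≤ N)
    (m1 : ℕ) (hm1 : 1 < m1) (hm1L : m1 < L)
    (η : Cfg L N) (hη : Interlaced m1 η)
    (p : Site L N) (hp : η p = true) :
    (∃ t : ℕ, 0 < t ∧ (stepUR η)^[t] p = p) ∧
    (∀ i j : ℕ, i < retTime η p → j < retTime η p →
      (stepUR η)^[i] p = (stepUR η)^[j] p → i = j) ∧
    (∀ p' : Site L N, η p' = true →
      windH η p' = windH η p ∧ windV η p' = windV η p) :=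
  upRight_loop_simple_winding_independent_general m1 η hη p hp

end QWhittaker
end
end

section
/- If a configuration lies in Ω_{L,N;m1,m2} with m2 ≥ 1, then for every particle p the families V_p^+ and V_p^− contain at most N−1 particles. In particular the upward and downward edges form no loops, and V_p^+ has a unique highest particle r_p^+ while V_p^− has a unique lowest particle r_p^−. -/
/-!
Interlacing particle configurations on the discrete torus `T_{L,N}`,
the periodized `q`-Whittaker dynamics and its Gibbs measures
(Corwin–Toninelli, "A (2+1)-dimensional growth process with explicit
stationary measures").
-/

open scoped Classical

noncomputable section

namespace QWhittaker

variable {L N : ℕ}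

/-!
If the column of `p` were fully occupied, every `F` along it would vanish, so the loop `Γ`
would climb straight up the column, giving `N_h = 0` and `N_v = 1`, which is incompatible with
`m1 · N_h = m2 · N_v` and `m2 ≥ 1`. Hence the column of `p` has an empty site, and `V_p^±`, being
runs of consecutive occupied sites starting at `p`, stop before reaching it: they have fewer
than `N` elements and a unique extremal particle.
-/

section FullColumn

variable {η : Cfg L N} {p : Site L N}

theorem dF_eq_zero_of_column_full (hcol : ∀ s, η (p.1, s) = true) (s : ZMod N) :
    dF η (p.1, s) = 0 :=
  Nat.sInf_eq_zero.mpr (Or.inl (by simpa using hcol (s + 1)))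

theorem iterate_stepUR_of_column_full (hcol : ∀ s, η (p.1, s) = true) (t : ℕ) :
    (stepUR η)^[t] p = (p.1, p.2 + (t : ZMod N)) := by
  induction t with
  | zero => simp
  | succ t ih =>
    rw [Function.iterate_succ_apply', ih, stepUR, dF_eq_zero_of_column_full hcol]
    simp [add_assoc]

theorem windH_of_column_full (hcol : ∀ s, η (p.1, s) = true) : windH η p = 0 := by
  simp [windH, iterate_stepUR_of_column_full hcol, dF_eq_zero_of_column_full hcol]

variable [NeZero N]

theorem retTime_of_column_full (hcol : ∀ s, η (p.1, s) = true) : retTime η p = N := by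
  have hret : ∀ t : ℕ, (stepUR η)^[t] p = p ↔ N ∣ t := fun t => by
    rw [iterate_stepUR_of_column_full hcol, ← ZMod.natCast_eq_zero_iff]
    constructor
    · intro h; simpa using congrArg Prod.snd h
    · intro h; simp [h]
  have hleast : IsLeast {t : ℕ | 0 < t ∧ N ∣ t} N :=
    ⟨⟨NeZero.pos N, dvd_rfl⟩, fun t ht => Nat.le_of_dvd ht.1 ht.2⟩
  simpa only [retTime, hret] using hleast.csInf_eq

theorem windV_of_column_full (hcol : ∀ s, η (p.1, s) = true) : windV η p = 1 := by
  rw [windV, retTime_of_column_full hcol, Nat.div_self (NeZero.pos N)]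

theorem exists_hole_of_winding {m1 m2 : ℕ} (hw : m1 * windH η p = m2 * windV η p)
    (hm2 : 1 ≤ m2) : ∃ s, η (p.1, s) = false := by
  by_contra! hcol
  simp only [ne_eq, Bool.not_eq_false] at hcol
  rw [windH_of_column_full hcol, windV_of_column_full hcol] at hw
  omega

end FullColumn

section InitialRun

variable {α : Type*} (P : ℕ → Prop) (f : ℕ → α)

/-- `Vplus η p` and `Vminus η p` are, definitionally, initial runs along the column of `p`. -/
def initialRun : Set α := {z | ∃ j, z = f j ∧ ∀ i ≤ j, P i}

variable {P f}

theorem ncard_initialRun_le {k : ℕ} (hk : ¬ P k) : (initialRun P f).ncard ≤ k := by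
  have hsub : initialRun P f ⊆ f '' Set.Iio k := by
    rintro _ ⟨j, rfl, hj⟩
    exact ⟨j, lt_of_not_ge fun hkj => hk (hj k hkj), rfl⟩
  calc (initialRun P f).ncard ≤ (f '' Set.Iio k).ncard :=
        Set.ncard_le_ncard hsub ((Set.finite_Iio k).image f)
    _ ≤ (Set.Iio k).ncard := Set.ncard_image_le (Set.finite_Iio k)
    _ = k := by simp

theorem existsUnique_mem_initialRun_of_not_succ {Q : α → Prop}
    (hQ : ∀ j, Q (f j) ↔ ¬ P (j + 1)) (h0 : P 0) {k : ℕ} (hk : ¬ P k) :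
    ∃! z, z ∈ initialRun P f ∧ Q z := by
  have hex : ∃ n, ¬ P (n + 1) := by
    obtain ⟨n, rfl⟩ := Nat.exists_eq_succ_of_ne_zero (show k ≠ 0 by rintro rfl; exact hk h0)
    exact ⟨n, hk⟩
  have hrun : ∀ i ≤ Nat.find hex, P i
    | 0, _ => h0
    | i + 1, hi => not_not.mp (Nat.find_min hex hi)
  refine ⟨f (Nat.find hex), ⟨⟨_, rfl, hrun⟩, (hQ _).2 (Nat.find_spec hex)⟩, ?_⟩
  rintro _ ⟨⟨j, rfl, hj⟩, hQj⟩
  have hle : j ≤ Nat.find hex :=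
    le_of_not_gt fun hlt => Nat.find_spec hex (hj _ hlt)
  rw [le_antisymm hle (Nat.find_min' hex ((hQ j).1 hQj))]

end InitialRun

section Column

variable [NeZero N] {η : Cfg L N} {p : Site L N}

theorem ncard_Vplus_lt_of_hole {s : ZMod N} (hs : η (p.1, s) = false) :
    (Vplus η p).ncard < N := by
  refine (ncard_initialRun_le (k := (s - p.2).val) ?_).trans_lt (ZMod.val_lt _)
  simp [hs]

theorem ncard_Vminus_lt_of_hole {s : ZMod N} (hs : η (p.1, s) = false) :
    (Vminus η p).ncard < N := by
  refine (ncard_initialRun_le (k := (p.2 - s).val) ?_).trans_lt (ZMod.val_lt _)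
  simp [hs]

theorem existsUnique_top_Vplus_of_hole (hp : η p = true) {s : ZMod N}
    (hs : η (p.1, s) = false) :
    ∃! z : Site L N, z ∈ Vplus η p ∧ η (z.1, z.2 + 1) = false := by
  refine existsUnique_mem_initialRun_of_not_succ (fun j => ?_) (by simpa using hp)
    (k := (s - p.2).val) (by simp [hs])
  simp [add_assoc]

theorem existsUnique_bottom_Vminus_of_hole (hp : η p = true) {s : ZMod N}
    (hs : η (p.1, s) = false) :
    ∃! z : Site L N, z ∈ Vminus η p ∧ η (z.1, z.2 - 1) = false := by
  refine existsUnique_mem_initialRun_of_not_succ (fun j => ?_) (by simpa using hp)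
    (k := (p.2 - s).val) (by simp [hs])
  simp [sub_sub]

end Column

theorem Vplus_Vminus_card_le_general
    {L N : ℕ} [NeZero L] [NeZero N]
    (m1 m2 : ℕ) (hm2 : 1 ≤ m2)
    (η : Cfg L N) (hη : InSector m1 m2 η)
    (p : Site L N) (hp : η p = true) :
    (Vplus η p).ncard ≤ N - 1 ∧ (Vminus η p).ncard ≤ N - 1 ∧
    (∃! z : Site L N, z ∈ Vplus η p ∧ η (z.1, z.2 + 1) = false) ∧
    (∃! z : Site L N, z ∈ Vminus η p ∧ η (z.1, z.2 - 1) = false) := by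
  obtain ⟨s, hs⟩ := exists_hole_of_winding (hη.2 p hp) hm2
  refine ⟨?_, ?_, existsUnique_top_Vplus_of_hole hp hs,
    existsUnique_bottom_Vminus_of_hole hp hs⟩
  · exact Nat.le_sub_one_of_lt (ncard_Vplus_lt_of_hole hs)
  · exact Nat.le_sub_one_of_lt (ncard_Vminus_lt_of_hole hs)

/-- In a configuration of the sector `Ω_{L,N;m1,m2}` with `m2 ≥ 1`, the
families `V_p⁺` and `V_p⁻` contain at most `N-1` particles; in particular the upward and
downward edges form no loops and `V_p⁺` (resp. `V_p⁻`) has a unique highest (resp. lowest)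
particle. -/
theorem Vplus_Vminus_card_le
    {L N : ℕ} [NeZero L] [NeZero N] (hL : 2 ≤ L) (hN : 2 ≤ N)
    (m1 m2 : ℕ) (hm1 : 1 < m1) (hm1L : m1 < L) (hm2 : 1 ≤ m2) (hm2N : m2 < N)
    (hslope : m1 * N + m2 * L < L * N)
    (q : ℝ) (hq0 : 0 ≤ q) (hq1 : q < 1)
    (a : ZMod N → ℝ) (ha : ∀ t, 0 < a t)
    (η : Cfg L N) (hη : InSector m1 m2 η)
    (p : Site L N) (hp : η p = true) :
    (Vplus η p).ncard ≤ N - 1 ∧ (Vminus η p).ncard ≤ N - 1 ∧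
    (∃! z : Site L N, z ∈ Vplus η p ∧ η (z.1, z.2 + 1) = false) ∧
    (∃! z : Site L N, z ∈ Vminus η p ∧ η (z.1, z.2 - 1) = false) :=
  Vplus_Vminus_card_le_general m1 m2 hm2 η hη p hp

end QWhittaker
end
end

section
/- For every configuration η ∈ Ω_{L,N;m1,m2}, S1(η) = S2(η), where S1(η) = Σ_p a_{r(p)} (1−q^{B_p})(1−q^{D_p+1})/(1−q^{C_p+1}) and S2(η) = Σ_p a_{r(p)+1} (1−q^{A_p+1})(1−q^{E_p})/(1−q^{F_p+1}), both sums running over all particles p of η, with the row index r(p)+1 taken cyclically mod N. -/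
/-!
Interlacing particle configurations on the discrete torus `T_{L,N}`,
the periodized `q`-Whittaker dynamics and its Gibbs measures
(Corwin–Toninelli, "A (2+1)-dimensional growth process with explicit
stationary measures").
-/

open scoped Classical

noncomputable section

namespace QWhittaker

variable {L N : ℕ}

/-!
The map `p ↦ p₃` permutes the particles (it is inverted by `p ↦ p₆`), and interlacing gives
`A_{p₃} = B_p + C_p`, `E_{p₃} = D_p - C_p`, `F_{p₃} = C_p` and `r(p₃) + 1 = r(p)`. With these,
the `S1`-term of `p` equals the `S2`-term of `p₃` plus `a_{r(p)} (q^{D_p - C_p} - q^{B_p})`.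
The correction terms cancel in the sum: along the permutation `p ↦ p₁` of the particles one
has `D_{p₁} = A_p` and `C_{p₁} = A_p - B_p`, so `D_{p₁} - C_{p₁} = B_p`.
-/

theorem _root_.Nat.sInf_setOf_eq_of {P : ℕ → Prop} {n : ℕ} (hn : P n) (hlt : ∀ k < n, ¬P k) :
    sInf {k | P k} = n :=
  IsLeast.csInf_eq ⟨hn, fun k hk => not_lt.1 fun h => hlt k h hk⟩

theorem _root_.Nat.sInf_setOf_pos_sub_one_eq_of {P : ℕ → Prop} {n : ℕ} (hn : P (n + 1))
    (hlt : ∀ k, 0 < k → k ≤ n → ¬P k) : sInf {k | 0 < k ∧ P k} - 1 = n := by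
  rw [Nat.sInf_setOf_eq_of (P := fun k => 0 < k ∧ P k) ⟨n.succ_pos, hn⟩
    fun k hk h => hlt k h.1 (by omega) h.2, Nat.succ_sub_one]

theorem _root_.Nat.sInf_setOf_pos_spec {P : ℕ → Prop} (h : ∃ k, 0 < k ∧ P k) :
    P (sInf {k | 0 < k ∧ P k} - 1 + 1) ∧
      ∀ k, 0 < k → k ≤ sInf {k | 0 < k ∧ P k} - 1 → ¬P k := by
  obtain ⟨hpos, hP⟩ := Nat.sInf_mem (s := {k | 0 < k ∧ P k}) h
  exact ⟨by rwa [Nat.sub_add_cancel hpos],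
    fun k hk hle hPk => Nat.notMem_of_lt_sInf (s := {k | 0 < k ∧ P k}) (by omega) ⟨hk, hPk⟩⟩

theorem _root_.Finset.sum_comp_eq_of_injOn {α M : Type*} [AddCommMonoid M] {s : Finset α}
    {i : α → α} (hi : Set.MapsTo i s s) (hinj : Set.InjOn i s) (f : α → M) :
    ∑ a ∈ s, f (i a) = ∑ a ∈ s, f a :=
  Finset.sum_nbij i hi hinj (Finset.surjOn_of_injOn_of_card_le i hi hinj le_rfl) fun _ _ => rfl

theorem mul_one_sub_pow_mul_one_sub_pow_div_eq {K : Type*} [Field K] (a q : K) (B c e : ℕ)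
    (h : 1 - q ^ (c + 1) ≠ 0) :
    a * (1 - q ^ B) * (1 - q ^ (e + c + 1)) / (1 - q ^ (c + 1)) =
      a * (1 - q ^ (B + c + 1)) * (1 - q ^ e) / (1 - q ^ (c + 1)) + a * (q ^ e - q ^ B) := by
  rw [div_add' _ _ _ h]
  congr 1
  ring

-- The neighbours `p₁`, `p₄` and `p₃` of `p`.
abbrev rightNbr (η : Cfg L N) (p : Site L N) : Site L N :=
  (p.1 + ((dA η p + 1 : ℕ) : ZMod L), p.2)

abbrev leftNbr (η : Cfg L N) (p : Site L N) : Site L N :=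
  (p.1 - ((dD η p + 1 : ℕ) : ZMod L), p.2)

abbrev lowerLeftNbr (η : Cfg L N) (p : Site L N) : Site L N :=
  (p.1 - (dC η p : ZMod L), p.2 - 1)

def dualRate (q : ℝ) (a : ZMod N → ℝ) (η : Cfg L N) (p : Site L N) : ℝ :=
  a (p.2 + 1) * (1 - q ^ (dA η p + 1)) * (1 - q ^ dE η p) / (1 - q ^ (dF η p + 1))

section Neighbours

variable {η : Cfg L N} {p : Site L N}

theorem dA_spec [NeZero L] (hp : η p = true) :
    η (p.1 + ((dA η p + 1 : ℕ) : ZMod L), p.2) = true ∧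
      ∀ k : ℕ, 0 < k → k ≤ dA η p → ¬η (p.1 + (k : ZMod L), p.2) = true :=
  Nat.sInf_setOf_pos_spec (P := fun k : ℕ => η (p.1 + (k : ZMod L), p.2) = true)
    ⟨L, NeZero.pos L, by simpa using hp⟩

theorem dD_spec [NeZero L] (hp : η p = true) :
    η (p.1 - ((dD η p + 1 : ℕ) : ZMod L), p.2) = true ∧
      ∀ k : ℕ, 0 < k → k ≤ dD η p → ¬η (p.1 - (k : ZMod L), p.2) = true :=
  Nat.sInf_setOf_pos_spec (P := fun k : ℕ => η (p.1 - (k : ZMod L), p.2) = true)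
    ⟨L, NeZero.pos L, by simpa using hp⟩

theorem dD_rightNbr [NeZero L] (hp : η p = true) : dD η (rightNbr η p) = dA η p :=
  Nat.sInf_setOf_pos_sub_one_eq_of (by simpa using hp) fun k hk0 hk hPk =>
    (dA_spec hp).2 (dA η p + 1 - k) (by omega) (by omega) (by
      convert hPk using 3
      rw [Nat.cast_sub (by omega : k ≤ dA η p + 1)]
      ring)

theorem leftNbr_rightNbr [NeZero L] (hp : η p = true) : leftNbr η (rightNbr η p) = p := by
  unfold leftNbr
  rw [dD_rightNbr hp]
  simp

variable [NeZero L] [NeZero N] {m1 : ℕ}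

theorem mem_particles : p ∈ particles η ↔ η p = true := by
  simp [particles]

theorem Interlaced.filter_below_right (hint : Interlaced m1 η) (hp : η p = true) :
    (Finset.Icc 1 (dA η p + 1)).filter
        (fun k : ℕ => η (p.1 + (k : ZMod L), p.2 - 1) = true) = {dB η p + 1} := by
  obtain ⟨w, hw⟩ := Finset.card_eq_one.1 (hint.2 p hp).1
  have hmem : ∀ k, (1 ≤ k ∧ k ≤ dA η p + 1) ∧ η (p.1 + (k : ZMod L), p.2 - 1) = true ↔
      k = w := by
    simpa only [Finset.mem_filter, Finset.mem_Icc, Finset.mem_singleton] using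
      fun k => Finset.ext_iff.1 hw k
  obtain ⟨⟨hw1, hwA⟩, hPw⟩ := (hmem w).2 rfl
  have hB : dB η p = w - 1 :=
    Nat.sInf_setOf_pos_sub_one_eq_of (by rwa [Nat.sub_add_cancel hw1])
      fun k hk hkw hPk => by have := (hmem k).1 ⟨⟨hk, by omega⟩, hPk⟩; omega
  rw [hw, hB, Nat.sub_add_cancel hw1]

theorem Interlaced.filter_below_left (hint : Interlaced m1 η) (hp : η p = true) :
    (Finset.Icc 0 (dD η p)).filter
        (fun k : ℕ => η (p.1 - (k : ZMod L), p.2 - 1) = true) = {dC η p} := by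
  obtain ⟨w, hw⟩ := Finset.card_eq_one.1 (hint.2 p hp).2
  have hmem : ∀ k, (0 ≤ k ∧ k ≤ dD η p) ∧ η (p.1 - (k : ZMod L), p.2 - 1) = true ↔ k = w := by
    simpa only [Finset.mem_filter, Finset.mem_Icc, Finset.mem_singleton] using
      fun k => Finset.ext_iff.1 hw k
  obtain ⟨⟨-, hwD⟩, hPw⟩ := (hmem w).2 rfl
  have hC : dC η p = w :=
    Nat.sInf_setOf_eq_of hPw
      fun k hkw hPk => by have := (hmem k).1 ⟨⟨k.zero_le, by omega⟩, hPk⟩; omega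
  rw [hw, hC]

theorem Interlaced.below_right_iff (hint : Interlaced m1 η) (hp : η p = true) {k : ℕ}
    (hk0 : 0 < k) (hk : k ≤ dA η p + 1) :
    η (p.1 + (k : ZMod L), p.2 - 1) = true ↔ k = dB η p + 1 := by
  simpa [hk, Nat.one_le_iff_ne_zero.mpr hk0.ne'] using
    Finset.ext_iff.1 (hint.filter_below_right hp) k

theorem Interlaced.below_left_iff (hint : Interlaced m1 η) (hp : η p = true) {k : ℕ}
    (hk : k ≤ dD η p) : η (p.1 - (k : ZMod L), p.2 - 1) = true ↔ k = dC η p := by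
  simpa [hk] using Finset.ext_iff.1 (hint.filter_below_left hp) k

theorem Interlaced.dB_le_dA (hint : Interlaced m1 η) (hp : η p = true) : dB η p ≤ dA η p := by
  have := Finset.ext_iff.1 (hint.filter_below_right hp) (dB η p + 1)
  simp only [Finset.mem_filter, Finset.mem_Icc, Finset.mem_singleton, iff_true] at this
  omega

theorem Interlaced.dC_le_dD (hint : Interlaced m1 η) (hp : η p = true) : dC η p ≤ dD η p := by
  have := Finset.ext_iff.1 (hint.filter_below_left hp) (dC η p)
  simp only [Finset.mem_filter, Finset.mem_Icc, Finset.mem_singleton, iff_true] at this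
  exact this.1.2

theorem Interlaced.dC_rightNbr (hint : Interlaced m1 η) (hp : η p = true) :
    dC η (rightNbr η p) = dA η p - dB η p := by
  have hBA := hint.dB_le_dA hp
  refine Nat.sInf_setOf_eq_of ?_ fun k hk hPk => ?_
  · convert (hint.below_right_iff hp (k := dB η p + 1) (by omega) (by omega)).2 rfl using 3
    push_cast [Nat.cast_sub hBA]
    ring
  · have := (hint.below_right_iff hp (k := dA η p + 1 - k) (by omega) (by omega)).1 (by
      convert hPk using 3
      rw [Nat.cast_sub (by omega : k ≤ dA η p + 1)]
      ring)
    omega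

theorem Interlaced.dF_lowerLeftNbr (hint : Interlaced m1 η) (hp : η p = true) :
    dF η (lowerLeftNbr η p) = dC η p :=
  Nat.sInf_setOf_eq_of (by simpa using hp) fun k hk hPk =>
    (dD_spec hp).2 (dC η p - k) (by omega) (by have := hint.dC_le_dD hp; omega) (by
      convert hPk using 3
      · rw [Nat.cast_sub hk.le]
        ring
      · simp)

theorem Interlaced.stepUR_lowerLeftNbr (hint : Interlaced m1 η) (hp : η p = true) :
    stepUR η (lowerLeftNbr η p) = p := by
  rw [stepUR, hint.dF_lowerLeftNbr hp]
  simp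

theorem Interlaced.lowerLeftNbr_mem (hint : Interlaced m1 η) (hp : η p = true) :
    η (lowerLeftNbr η p) = true :=
  (hint.below_left_iff hp (hint.dC_le_dD hp)).2 rfl

theorem Interlaced.dA_lowerLeftNbr (hint : Interlaced m1 η) (hp : η p = true) :
    dA η (lowerLeftNbr η p) = dB η p + dC η p := by
  have hBA := hint.dB_le_dA hp
  have hCD := hint.dC_le_dD hp
  refine Nat.sInf_setOf_pos_sub_one_eq_of ?_ fun k hk0 hk hPk => ?_
  · convert (hint.below_right_iff hp (k := dB η p + 1) (by omega) (by omega)).2 rfl using 3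
    push_cast
    ring
  rcases le_or_gt k (dC η p) with hkC | hkC
  · have := (hint.below_left_iff hp (k := dC η p - k) (by omega)).1 (by
      convert hPk using 3
      rw [Nat.cast_sub hkC]
      ring)
    omega
  · have := (hint.below_right_iff hp (k := k - dC η p) (by omega) (by omega)).1 (by
      convert hPk using 3
      rw [Nat.cast_sub hkC.le]
      ring)
    omega

theorem Interlaced.dE_lowerLeftNbr (hint : Interlaced m1 η) (hp : η p = true) :
    dE η (lowerLeftNbr η p) = dD η p - dC η p := by
  have hCD := hint.dC_le_dD hp
  refine Nat.sInf_setOf_pos_sub_one_eq_of ?_ fun k hk0 hk hPk => ?_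
  · convert (dD_spec hp).1 using 3
    · push_cast [Nat.cast_sub hCD]
      ring
    · simp
  · refine (dD_spec hp).2 (dC η p + k) (by omega) (by omega) ?_
    convert hPk using 3
    · push_cast
      ring
    · simp

end Neighbours

section Sums

variable [NeZero L] [NeZero N] {m1 : ℕ} {η : Cfg L N}

theorem sum_rightNbr {M : Type*} [AddCommMonoid M] (f : Site L N → M) :
    ∑ p ∈ particles η, f (rightNbr η p) = ∑ p ∈ particles η, f p :=
  Finset.sum_comp_eq_of_injOn (fun _ hp => mem_particles.2 (dA_spec (mem_particles.1 hp)).1)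
    (Set.LeftInvOn.injOn (f₁' := leftNbr η) fun _ hp => leftNbr_rightNbr (mem_particles.1 hp)) f

theorem Interlaced.sum_lowerLeftNbr (hint : Interlaced m1 η) {M : Type*} [AddCommMonoid M]
    (f : Site L N → M) :
    ∑ p ∈ particles η, f (lowerLeftNbr η p) = ∑ p ∈ particles η, f p :=
  Finset.sum_comp_eq_of_injOn
    (fun _ hp => mem_particles.2 (hint.lowerLeftNbr_mem (mem_particles.1 hp)))
    (Set.LeftInvOn.injOn (f₁' := stepUR η)
      fun _ hp => hint.stepUR_lowerLeftNbr (mem_particles.1 hp)) f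

theorem Interlaced.sum_mul_pow_sub_eq_zero (hint : Interlaced m1 η) {R : Type*} [CommRing R]
    (a : ZMod N → R) (q : R) :
    ∑ p ∈ particles η, a p.2 * (q ^ (dD η p - dC η p) - q ^ dB η p) = 0 := by
  simp only [mul_sub, Finset.sum_sub_distrib, sub_eq_zero]
  calc ∑ p ∈ particles η, a p.2 * q ^ (dD η p - dC η p)
      = ∑ p ∈ particles η,
          a (rightNbr η p).2 * q ^ (dD η (rightNbr η p) - dC η (rightNbr η p)) :=
        (sum_rightNbr fun p => a p.2 * q ^ (dD η p - dC η p)).symm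
    _ = ∑ p ∈ particles η, a p.2 * q ^ dB η p := Finset.sum_congr rfl fun p hp => by
        have hp := mem_particles.1 hp
        rw [dD_rightNbr hp, hint.dC_rightNbr hp, Nat.sub_sub_self (hint.dB_le_dA hp)]

theorem Interlaced.rate_eq_dualRate_lowerLeftNbr_add (hint : Interlaced m1 η) {q : ℝ}
    (hq0 : 0 ≤ q) (hq1 : q < 1) (a : ZMod N → ℝ) {p : Site L N} (hp : η p = true) :
    rate q a η p =
      dualRate q a η (lowerLeftNbr η p) + a p.2 * (q ^ (dD η p - dC η p) - q ^ dB η p) := by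
  have hden : 1 - q ^ (dC η p + 1) ≠ 0 :=
    (sub_pos.2 (pow_lt_one₀ hq0 hq1 (Nat.succ_ne_zero _))).ne'
  have hD : dD η p + 1 = dD η p - dC η p + dC η p + 1 := by
    have := hint.dC_le_dD hp
    omega
  rw [dualRate, hint.dA_lowerLeftNbr hp, hint.dE_lowerLeftNbr hp, hint.dF_lowerLeftNbr hp,
    show (lowerLeftNbr η p).2 + 1 = p.2 from sub_add_cancel _ _, rate, hD]
  exact mul_one_sub_pow_mul_one_sub_pow_div_eq _ _ _ _ _ hden

end Sums

theorem S1_eq_S2_general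
    {L N : ℕ} [NeZero L] [NeZero N]
    (m1 m2 : ℕ)
    (q : ℝ) (hq0 : 0 ≤ q) (hq1 : q < 1)
    (a : ZMod N → ℝ)
    (η : Cfg L N) (hη : InSector m1 m2 η) :
    ∑ p ∈ particles η,
        a p.2 * (1 - q ^ dB η p) * (1 - q ^ (dD η p + 1)) / (1 - q ^ (dC η p + 1)) =
      ∑ p ∈ particles η,
        a (p.2 + 1) * (1 - q ^ (dA η p + 1)) * (1 - q ^ dE η p) /
          (1 - q ^ (dF η p + 1)) := by
  obtain ⟨hint, -⟩ := hη
  change ∑ p ∈ particles η, rate q a η p = ∑ p ∈ particles η, dualRate q a η p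
  rw [Finset.sum_congr rfl fun p hp =>
      hint.rate_eq_dualRate_lowerLeftNbr_add hq0 hq1 a (mem_particles.1 hp),
    Finset.sum_add_distrib, hint.sum_lowerLeftNbr (dualRate q a η),
    hint.sum_mul_pow_sub_eq_zero, add_zero]

/-- For every configuration of the sector, `S1(η) = S2(η)`:
`∑_p a_{r(p)}(1-q^{B_p})(1-q^{D_p+1})/(1-q^{C_p+1})
 = ∑_p a_{r(p)+1}(1-q^{A_p+1})(1-q^{E_p})/(1-q^{F_p+1})`. -/
theorem S1_eq_S2
    {L N : ℕ} [NeZero L] [NeZero N] (hL : 2 ≤ L) (hN : 2 ≤ N)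
    (m1 m2 : ℕ) (hm1 : 1 < m1) (hm1L : m1 < L) (hm2 : 1 ≤ m2) (hm2N : m2 < N)
    (hslope : m1 * N + m2 * L < L * N)
    (q : ℝ) (hq0 : 0 ≤ q) (hq1 : q < 1)
    (a : ZMod N → ℝ) (ha : ∀ t, 0 < a t)
    (η : Cfg L N) (hη : InSector m1 m2 η) :
    ∑ p ∈ particles η,
        a p.2 * (1 - q ^ dB η p) * (1 - q ^ (dD η p + 1)) / (1 - q ^ (dC η p + 1)) =
      ∑ p ∈ particles η,
        a (p.2 + 1) * (1 - q ^ (dA η p + 1)) * (1 - q ^ dE η p) /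
          (1 - q ^ (dF η p + 1)) :=
  S1_eq_S2_general m1 m2 q hq0 hq1 a η hη

end QWhittaker
end
end

section
/- Let η ∈ Ω_{L,N;m1,m2} and let p be a particle of η with B_p ≥ 1. Then the configuration obtained from η by shifting every particle of V_p^+ one step to the right (+e1) is again a valid interlacing configuration and lies in the same sector Ω_{L,N;m1,m2}: the interlacing constraints are preserved, as are the number m1 of particles per row and the sector parameter m2. -/
/-!
Interlacing particle configurations on the discrete torus `T_{L,N}`,
the periodized `q`-Whittaker dynamics and its Gibbs measures
(Corwin–Toninelli, "A (2+1)-dimensional growth process with explicit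
stationary measures").
-/

open scoped Classical

noncomputable section

namespace QWhittaker

variable {L N : ℕ}

/-!
Since `B_p ≥ 1`, interlacing forces the sites right and below-right of every particle of `V_p⁺`
to be empty. Hence the move is the transposition of the columns `x_p` and `x_p + 1` on the rows
met by `V_p⁺`: `moveR η p = η ∘ colSwap η p`. Two consecutive rows interlace when every window
`(y, y']` between consecutive particles of the upper row holds exactly one particle of the lower
row. This survives moving a particle of the upper row from `x` to `x + 1` when the lower row is
empty at `x + 1` (the windows change only at `x + 1`), and moving a particle of the lower row
when the upper row is empty at `x` (then each window contains both or neither of `x`, `x + 1`).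
On particles, `colSwap` conjugates the up-right map `r ↦ r₆`, so it maps loops to loops with the
same return time, and `F_r` changes by `χ(r₆) - χ(r)`, `χ` the indicator of `V_p⁺`; this
telescopes to zero around a loop, so both winding numbers are preserved.
-/

open Finset

lemma natCast_inj_of_lt {a b : ℕ} (ha : a < L) (hb : b < L) : (a : ZMod L) = b ↔ a = b := by
  rw [ZMod.natCast_eq_natCast_iff', Nat.mod_eq_of_lt ha, Nat.mod_eq_of_lt hb]

lemma natCast_inj_of_mem_Icc {a b : ℕ} (ha : a ∈ Icc 1 L) (hb : b ∈ Icc 1 L) :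
    (a : ZMod L) = b ↔ a = b := by
  rw [mem_Icc] at ha hb
  have hsucc : ∀ c : ℕ, 1 ≤ c → (c : ZMod L) = ((c - 1 : ℕ) : ZMod L) + 1 := fun c hc => by
    rw [Nat.cast_sub hc, Nat.cast_one, sub_add_cancel]
  rw [hsucc a ha.1, hsucc b hb.1, add_left_inj, natCast_inj_of_lt (by omega) (by omega)]
  omega

lemma card_filter_comp_swap {α : Type*} [DecidableEq α] {W : Finset α} {a b : α}
    (P : α → Prop) [DecidablePred P] (hW : a ∈ W ↔ b ∈ W) :
    #{z ∈ W | P (Equiv.swap a b z)} = #{z ∈ W | P z} := by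
  have hmaps : ∀ z ∈ W, Equiv.swap a b z ∈ W := fun z hz => by
    rcases eq_or_ne z a with rfl | hza
    · simpa using hW.mp hz
    rcases eq_or_ne z b with rfl | hzb
    · simpa using hW.mpr hz
    rwa [Equiv.swap_apply_of_ne_of_ne hza hzb]
  refine card_nbij' (Equiv.swap a b) (Equiv.swap a b) (fun z hz => ?_) (fun z hz => ?_)
    (fun z _ => Equiv.swap_apply_self _ _ _) (fun z _ => Equiv.swap_apply_self _ _ _)
  · simp only [coe_filter, Set.mem_ofPred_eq] at hz ⊢
    exact ⟨hmaps z hz.1, hz.2⟩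
  · simp only [coe_filter, Set.mem_ofPred_eq, Equiv.swap_apply_self] at hz ⊢
    exact ⟨hmaps z hz.1, hz.2⟩

lemma sum_range_succ_eq_of_eq {M : Type*} [AddCommMonoid M] [IsRightCancelAdd M]
    (g : ℕ → M) {T : ℕ} (hT : g T = g 0) :
    ∑ i ∈ range T, g (i + 1) = ∑ i ∈ range T, g i :=
  add_right_cancel ((sum_range_succ' g T).symm.trans ((sum_range_succ g T).trans (by rw [hT])))

section Row

variable {u ℓ r : ZMod L → Bool} {x y : ZMod L} {d : ℕ}

def IsGap (r : ZMod L → Bool) (y : ZMod L) (d : ℕ) : Prop :=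
  0 < d ∧ r (y + d) = true ∧ ∀ k, 0 < k → k < d → r (y + k) = false

lemma IsGap.le [NeZero L] (hy : r y = true) (h : IsGap r y d) : d ≤ L := by
  by_contra! hlt
  have := h.2.2 L (NeZero.pos L) hlt
  simp_all

lemma IsGap.sInf_eq (h : IsGap r y d) : sInf {k : ℕ | 0 < k ∧ r (y + k) = true} = d := by
  refine le_antisymm (Nat.sInf_le ⟨h.1, h.2.1⟩) (not_lt.mp fun hlt => ?_)
  obtain ⟨hpos, hk⟩ := Nat.sInf_mem (s := {k : ℕ | 0 < k ∧ r (y + k) = true}) ⟨d, h.1, h.2.1⟩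
  simp [h.2.2 _ hpos hlt] at hk

lemma exists_isGap [NeZero L] (hy : r y = true) : ∃ d, IsGap r y d := by
  have hL : L ∈ {k : ℕ | 0 < k ∧ r (y + k) = true} := ⟨NeZero.pos L, by simpa using hy⟩
  obtain ⟨hpos, hd⟩ := Nat.sInf_mem ⟨L, hL⟩
  refine ⟨_, hpos, hd, fun k hk hlt => ?_⟩
  simpa [hk] using Nat.notMem_of_lt_sInf hlt

def window (y : ZMod L) (d : ℕ) : Finset (ZMod L) := (Icc 1 d).image fun k : ℕ => y + k

lemma mem_window {z : ZMod L} : z ∈ window y d ↔ ∃ k, 1 ≤ k ∧ k ≤ d ∧ y + k = z := by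
  simp [window, and_assoc]

lemma window_succ_right (y : ZMod L) (d : ℕ) :
    window y (d + 1) = insert (y + (d + 1 : ℕ)) (window y d) := by
  rw [window, ← insert_Icc_right_eq_Icc_add_one (by omega), image_insert, window]

lemma window_succ_left (y : ZMod L) (d : ℕ) :
    window y (d + 1) = insert (y + 1) (window (y + 1) d) := by
  rw [window, ← insert_Icc_add_one_left_eq_Icc (by omega), image_insert, Nat.cast_one, window,
    ← image_add_right_Icc, image_image]
  congr 2
  ext k
  simp only [Function.comp_apply]
  push_cast
  ring

lemma card_filter_Icc_eq_card_filter_window (hd : d ≤ L) :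
    #{k ∈ Icc 1 d | ℓ (y + (k : ℕ)) = true} = #{z ∈ window y d | ℓ z = true} := by
  rw [window, filter_image, card_image_of_injOn]
  intro a ha b hb hab
  simp only [coe_filter, mem_Icc, Set.mem_ofPred_eq, add_right_inj] at ha hb hab
  exact (natCast_inj_of_mem_Icc (mem_Icc.mpr ⟨ha.1.1, by omega⟩)
    (mem_Icc.mpr ⟨hb.1.1, by omega⟩)).mp hab

lemma card_filter_insert_of_false {W : Finset (ZMod L)} {a : ZMod L} (ha : ℓ a = false) :
    #{z ∈ insert a W | ℓ z = true} = #{z ∈ W | ℓ z = true} := by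
  rw [filter_insert, if_neg (by simp [ha])]

lemma window_add_one_eq_of_natCast_eq_zero (h : ((d + 1 : ℕ) : ZMod L) = 0) :
    window (y + 1) (d + 1) = window y (d + 1) := by
  rw [window_succ_right, window_succ_left, h, add_zero]

-- The `A_p` part of `Interlaced`, for an upper row `u` and the row `ℓ` below it.
def RowInterlaced (u ℓ : ZMod L → Bool) : Prop :=
  ∀ y d, u y = true → IsGap u y d → #{z ∈ window y d | ℓ z = true} = 1

lemma RowInterlaced.lower_of_adjacent (h : RowInterlaced u ℓ) (hx : u x = true)
    (hx1 : u (x + 1) = true) : ℓ (x + 1) = true := by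
  have hgap : IsGap u x 1 := ⟨one_pos, by simpa using hx1, fun k hk hk1 => by omega⟩
  have := h x 1 hx hgap
  simp only [window, Icc_self, image_singleton, Nat.cast_one, filter_singleton] at this
  split_ifs at this with hℓ
  · exact hℓ
  · simp at this

lemma RowInterlaced.comp_swap_right (h : RowInterlaced u ℓ) (hu : u x = false) :
    RowInterlaced u (ℓ ∘ Equiv.swap x (x + 1)) := by
  intro y d hy hgap
  have hW : x ∈ window y d ↔ x + 1 ∈ window y d := by
    simp only [mem_window]
    constructor
    · rintro ⟨k, hk1, hkd, rfl⟩
      have hkd' : k ≠ d := by rintro rfl; simp [hgap.2.1] at hu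
      exact ⟨k + 1, by omega, by omega, by push_cast; ring⟩
    · rintro ⟨k, hk1, hkd, hk⟩
      have hk1' : k ≠ 1 := by rintro rfl; simp_all
      refine ⟨k - 1, by omega, by omega, add_right_cancel (b := 1) ?_⟩
      rw [← hk, Nat.cast_sub (by omega)]
      ring
  simpa [Function.comp_def] using (card_filter_comp_swap (fun z => ℓ z = true) hW).trans
    (h y d hy hgap)

lemma exists_isGap_of_isGap_comp_swap_succ [NeZero L] (hx : u x = true)
    (hx1 : u (x + 1) = false) (hgap : IsGap (u ∘ Equiv.swap x (x + 1)) (x + 1) d) :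
    ∃ e, IsGap u x e ∧ window x e = insert (x + 1) (window (x + 1) d) := by
  have hd : d ≤ L := hgap.le (by simpa using hx)
  have hbetween : ∀ k : ℕ, 0 < k → k < d + 1 → k < L → u (x + k) = false := by
    intro k hk0 hkd hkL
    rcases eq_or_ne k 1 with rfl | hk1
    · simpa using hx1
    have hxk : x + 1 + ((k - 1 : ℕ) : ZMod L) = x + k := by
      rw [Nat.cast_sub (by omega)]
      ring
    have hk := hgap.2.2 (k - 1) (by omega) (by omega)
    rw [hxk, Function.comp_apply, Equiv.swap_apply_of_ne_of_ne] at hk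
    · exact hk
    · rw [Ne, add_eq_left, ← Nat.cast_zero, natCast_inj_of_lt hkL (NeZero.pos L)]
      omega
    · rw [Ne, add_right_inj, ← Nat.cast_one, natCast_inj_of_lt hkL (by omega)]
      exact hk1
  rcases hd.lt_or_eq with hdL | hdL
  · refine ⟨d + 1, ⟨by omega, ?_, fun k hk hkd => hbetween k hk hkd (by omega)⟩,
      window_succ_left x d⟩
    have hend := hgap.2.1
    have hxd : x + 1 + (d : ZMod L) = x + ((d + 1 : ℕ) : ZMod L) := by push_cast; ring
    rw [hxd, Function.comp_apply] at hend
    have hne : x + ((d + 1 : ℕ) : ZMod L) ≠ x := fun h => by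
      rw [h, Equiv.swap_apply_left, hx1] at hend
      exact Bool.false_ne_true hend
    have hne1 : x + ((d + 1 : ℕ) : ZMod L) ≠ x + 1 := fun h => by
      have := (natCast_inj_of_mem_Icc (a := d + 1) (b := 1) (by simp; omega)
        (by simp; exact NeZero.one_le)).mp (by rw [add_right_inj] at h; rw [h, Nat.cast_one])
      exact hgap.1.ne' (by omega)
    rwa [Equiv.swap_apply_of_ne_of_ne hne hne1] at hend
  · refine ⟨d, ⟨hgap.1, by rwa [hdL, ZMod.natCast_self, add_zero],
      fun k hk hkd => hbetween k hk (by omega) (by omega)⟩, ?_⟩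
    have hW : window (x + 1) d = window x d := by
      obtain ⟨m, rfl⟩ : ∃ m, d = m + 1 := ⟨d - 1, by have := hgap.1; omega⟩
      exact window_add_one_eq_of_natCast_eq_zero (by rw [hdL, ZMod.natCast_self])
    rw [hW, insert_eq_of_mem (mem_window.mpr ⟨1, le_rfl, hgap.1, by simp⟩)]

lemma exists_isGap_of_isGap_comp_swap_of_ne [NeZero L] (hx : u x = true)
    (hx1 : u (x + 1) = false) (hy : u y = true) (hyx : y ≠ x) (hyx1 : y ≠ x + 1)
    (hgap : IsGap (u ∘ Equiv.swap x (x + 1)) y d) :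
    ∃ e, IsGap u y e ∧ insert (x + 1) (window y e) = insert (x + 1) (window y d) := by
  have hu' : ∀ z, z ≠ x → z ≠ x + 1 → (u ∘ Equiv.swap x (x + 1)) z = u z := fun z h h1 => by
    rw [Function.comp_apply, Equiv.swap_apply_of_ne_of_ne h h1]
  have hd : d ≤ L := hgap.le (by rwa [hu' y hyx hyx1])
  have hbetween : ∀ k : ℕ, 0 < k → k < d → y + k ≠ x → u (y + k) = false := by
    intro k hk hkd hkx
    have hk' := hgap.2.2 k hk hkd
    have hkx1 : y + (k : ZMod L) ≠ x + 1 := fun h => by simp [h, hx] at hk'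
    rwa [hu' _ hkx hkx1] at hk'
  by_cases hend : y + (d : ZMod L) = x + 1
  · have hd1 : d ≠ 1 := by
      rintro rfl
      exact hyx (by simpa using hend)
    have hprev : y + ((d - 1 : ℕ) : ZMod L) = x :=
      add_right_cancel (b := 1) (by rw [← hend, Nat.cast_sub (by have := hgap.1; omega)]; ring)
    refine ⟨d - 1, ⟨by have := hgap.1; omega, by rwa [hprev], fun k hk hkd =>
      hbetween k hk (by omega) fun h => ?_⟩, ?_⟩
    · rw [← hprev, add_right_inj, natCast_inj_of_mem_Icc (by simp; omega) (by simp; omega)] at h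
      omega
    · obtain ⟨m, rfl⟩ : ∃ m, d = m + 1 := ⟨d - 1, by have := hgap.1; omega⟩
      rw [window_succ_right, hend, Nat.add_sub_cancel, insert_idem]
  · refine ⟨d, ⟨hgap.1, ?_, fun k hk hkd => hbetween k hk hkd fun h => ?_⟩, rfl⟩
    · have hend' := hgap.2.1
      have hdx : y + (d : ZMod L) ≠ x := fun h => by simp [h, hx1] at hend'
      rwa [hu' _ hdx hend] at hend'
    · have h1 : y + ((k + 1 : ℕ) : ZMod L) = x + 1 := by push_cast; rw [← h]; ring
      rcases (Nat.succ_le_of_lt hkd).lt_or_eq with hlt | heq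
      · have := hgap.2.2 (k + 1) (by omega) hlt
        rw [h1, Function.comp_apply, Equiv.swap_apply_right, hx] at this
        exact Bool.false_ne_true this.symm
      · exact hend (by rw [← heq, h1])

lemma RowInterlaced.comp_swap_left [NeZero L] (h : RowInterlaced u ℓ) (hx : u x = true)
    (hx1 : u (x + 1) = false) (hℓ : ℓ (x + 1) = false) :
    RowInterlaced (u ∘ Equiv.swap x (x + 1)) ℓ := by
  intro y d hy hgap
  obtain ⟨y₀, e, hy₀, hgap₀, hW⟩ : ∃ y₀ e, u y₀ = true ∧ IsGap u y₀ e ∧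
      insert (x + 1) (window y₀ e) = insert (x + 1) (window y d) := by
    by_cases hyx1 : y = x + 1
    · subst hyx1
      obtain ⟨e, he, hW⟩ := exists_isGap_of_isGap_comp_swap_succ hx hx1 hgap
      exact ⟨x, e, hx, he, by rw [hW, insert_idem]⟩
    · have hyx : y ≠ x := by
        rintro rfl
        simp [hx1] at hy
      rw [Function.comp_apply, Equiv.swap_apply_of_ne_of_ne hyx hyx1] at hy
      obtain ⟨e, he, hW⟩ := exists_isGap_of_isGap_comp_swap_of_ne hx hx1 hy hyx hyx1 hgap
      exact ⟨y, e, hy, he, hW⟩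
  rw [← card_filter_insert_of_false hℓ, ← hW, card_filter_insert_of_false hℓ]
  exact h y₀ e hy₀ hgap₀

end Row

lemma RowInterlaced.card_filter_left [NeZero L] {u ℓ : ZMod L → Bool} {q : ZMod L}
    (h : RowInterlaced u ℓ) (hq : u q = true) :
    ((Icc 0 (sInf {k : ℕ | 0 < k ∧ u (q - k) = true} - 1)).filter
      fun j : ℕ => ℓ (q - j) = true).card = 1 := by
  set d := sInf {k : ℕ | 0 < k ∧ u (q - k) = true}
  have hL : L ∈ {k : ℕ | 0 < k ∧ u (q - k) = true} := ⟨NeZero.pos L, by simpa using hq⟩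
  obtain ⟨hd0, hdq⟩ : 0 < d ∧ u (q - d) = true := Nat.sInf_mem ⟨L, hL⟩
  have hgap : IsGap u (q - d) d := by
    refine ⟨hd0, by simpa using hq, fun k hk hkd => ?_⟩
    have hk' : q - d + k = q - ((d - k : ℕ) : ZMod L) := by rw [Nat.cast_sub hkd.le]; ring
    simpa [hk', show 0 < d - k by omega] using Nat.notMem_of_lt_sInf (show d - k < d by omega)
  refine Eq.trans ?_ (h _ d hdq hgap)
  rw [← card_filter_Icc_eq_card_filter_window (hgap.le hdq)]
  refine card_nbij' (fun j : ℕ => d - j) (fun k : ℕ => d - k) (fun j hj => ?_) (fun k hk => ?_)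
    (fun j hj => Nat.sub_sub_self ?_) (fun k hk => Nat.sub_sub_self ?_)
  · simp only [coe_filter, mem_Icc, Set.mem_ofPred_eq] at hj ⊢
    refine ⟨⟨by omega, by omega⟩, ?_⟩
    convert hj.2 using 2
    rw [Nat.cast_sub (by omega)]
    ring
  · simp only [coe_filter, mem_Icc, Set.mem_ofPred_eq] at hk ⊢
    refine ⟨⟨by omega, by omega⟩, ?_⟩
    convert hk.2 using 2
    rw [Nat.cast_sub hk.1.2]
    ring
  · simp only [coe_filter, mem_Icc, Set.mem_ofPred_eq] at hj
    omega
  · simp only [coe_filter, mem_Icc, Set.mem_ofPred_eq] at hk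
    omega

def row (η : Cfg L N) (t : ZMod N) : ZMod L → Bool := fun s => η (s, t)

lemma dA_add_one_eq_of_isGap {η : Cfg L N} {q : Site L N} {d : ℕ}
    (h : IsGap (row η q.2) q.1 d) : dA η q + 1 = d := by
  have h' : sInf {k : ℕ | 0 < k ∧ η (q.1 + k, q.2) = true} = d := h.sInf_eq
  rw [dA, h']
  have := h.1
  omega

lemma Interlaced.rowInterlaced [NeZero L] [NeZero N] {m1 : ℕ} {η : Cfg L N}
    (h : Interlaced m1 η) (t : ZMod N) : RowInterlaced (row η t) (row η (t - 1)) := by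
  intro y d hy hgap
  have hA := (h.2 (y, t) hy).1
  rw [dA_add_one_eq_of_isGap hgap] at hA
  rw [← card_filter_Icc_eq_card_filter_window (hgap.le hy)]
  exact hA

lemma interlaced_of_rowInterlaced [NeZero L] [NeZero N] {m1 : ℕ} {η : Cfg L N}
    (hcard : ∀ t, #{s | η (s, t) = true} = m1)
    (h : ∀ t, RowInterlaced (row η t) (row η (t - 1))) : Interlaced m1 η := by
  refine ⟨hcard, fun q hq => ⟨?_, (h q.2).card_filter_left hq⟩⟩
  obtain ⟨d, hgap⟩ := exists_isGap (r := row η q.2) hq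
  rw [dA_add_one_eq_of_isGap hgap]
  exact (card_filter_Icc_eq_card_filter_window (hgap.le hq)).trans (h q.2 q.1 d hq hgap)

section Vplus

variable {η : Cfg L N} {p z : Site L N} {t : ZMod N}

lemma fst_of_mem_Vplus (h : z ∈ Vplus η p) : z.1 = p.1 := by
  obtain ⟨j, rfl, -⟩ := h
  rfl

lemma particle_of_mem_Vplus (h : z ∈ Vplus η p) : η z = true := by
  obtain ⟨j, rfl, hj⟩ := h
  exact hj j le_rfl

lemma mem_Vplus_iff {s : ZMod L} : (s, t) ∈ Vplus η p ↔ s = p.1 ∧ (p.1, t) ∈ Vplus η p :=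
  ⟨fun h => ⟨fst_of_mem_Vplus h, fst_of_mem_Vplus h ▸ h⟩, fun ⟨hs, h⟩ => hs ▸ h⟩

lemma add_one_mem_Vplus (h : (p.1, t) ∈ Vplus η p) (ht : η (p.1, t + 1) = true) :
    (p.1, t + 1) ∈ Vplus η p := by
  obtain ⟨j, hj, hcol⟩ := h
  obtain rfl : t = p.2 + j := (Prod.ext_iff.mp hj).2
  refine ⟨j + 1, by push_cast; rw [add_assoc], fun i hi => ?_⟩
  rcases Nat.lt_or_ge i (j + 1) with hij | hij
  · exact hcol i (by omega)
  · rw [show i = j + 1 by omega]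
    push_cast
    rwa [← add_assoc]

lemma sub_one_mem_Vplus (h : (p.1, t) ∈ Vplus η p) (ht : t ≠ p.2) :
    (p.1, t - 1) ∈ Vplus η p := by
  obtain ⟨j, hj, hcol⟩ := h
  obtain rfl : t = p.2 + j := (Prod.ext_iff.mp hj).2
  obtain ⟨i, rfl⟩ : ∃ i, j = i + 1 := ⟨j - 1, by rcases j with _ | j <;> simp_all⟩
  exact ⟨i, by push_cast; ring_nf, fun k hk => hcol k (by omega)⟩

lemma right_eq_false_of_mem_Vplus (hI : ∀ t, RowInterlaced (row η t) (row η (t - 1)))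
    (hB : η (p.1 + 1, p.2 - 1) = false) (h : (p.1, t) ∈ Vplus η p) : η (p.1 + 1, t) = false := by
  obtain ⟨j, hj, hcol⟩ := h
  obtain rfl : t = p.2 + j := (Prod.ext_iff.mp hj).2
  clear hj
  induction j with
  | zero =>
    rw [Bool.eq_false_iff]
    intro hx1
    have := (hI p.2).lower_of_adjacent (x := p.1) (by simpa [row] using hcol 0 le_rfl)
      (by simpa [row] using hx1)
    simp_all [row]
  | succ j ih =>
    rw [Bool.eq_false_iff]
    intro hx1
    have := (hI _).lower_of_adjacent (x := p.1) (hcol (j + 1) le_rfl) hx1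
    rw [row, show p.2 + ((j + 1 : ℕ) : ZMod N) - 1 = p.2 + j by push_cast; ring] at this
    simp_all [ih fun i hi => hcol i (by omega)]

lemma lower_right_eq_false_of_mem_Vplus (hI : ∀ t, RowInterlaced (row η t) (row η (t - 1)))
    (hB : η (p.1 + 1, p.2 - 1) = false) (h : (p.1, t) ∈ Vplus η p) :
    η (p.1 + 1, t - 1) = false := by
  by_cases ht : t = p.2
  · rwa [ht]
  · exact right_eq_false_of_mem_Vplus hI hB (sub_one_mem_Vplus h ht)

end Vplus

def colSwap (η : Cfg L N) (p z : Site L N) : Site L N :=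
  if (p.1, z.2) ∈ Vplus η p then (Equiv.swap p.1 (p.1 + 1) z.1, z.2) else z

section colSwap

variable {η : Cfg L N} {p : Site L N}

lemma colSwap_involutive : Function.Involutive (colSwap η p) := by
  intro z
  by_cases h : (p.1, z.2) ∈ Vplus η p <;> simp [colSwap, h]

lemma row_comp_colSwap (t : ZMod N) :
    row (η ∘ colSwap η p) t =
      if (p.1, t) ∈ Vplus η p then row η t ∘ Equiv.swap p.1 (p.1 + 1) else row η t := by
  by_cases h : (p.1, t) ∈ Vplus η p <;> funext s <;> simp [row, colSwap, h]

lemma moveR_eq_comp_colSwap (hI : ∀ t, RowInterlaced (row η t) (row η (t - 1)))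
    (hB : η (p.1 + 1, p.2 - 1) = false) : moveR η p = η ∘ colSwap η p := by
  funext ⟨s, t⟩
  simp only [moveR, Function.comp_apply, colSwap, mem_Vplus_iff (s := s),
    mem_Vplus_iff (s := (s, t).1 - 1)]
  by_cases ht : (p.1, t) ∈ Vplus η p
  · have hx := particle_of_mem_Vplus ht
    have hx1 := right_eq_false_of_mem_Vplus hI hB ht
    have hne : p.1 + 1 ≠ p.1 := fun h => by simp_all
    rcases eq_or_ne s p.1 with rfl | hs
    · simpa [ht, hx1] using add_ne_left.mp hne
    rcases eq_or_ne s (p.1 + 1) with rfl | hs1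
    · simp [ht, hx, hne]
    · simp [ht, hs, hs1, Equiv.swap_apply_of_ne_of_ne, sub_eq_iff_eq_add]
  · simp [ht]

lemma rowInterlaced_comp_colSwap [NeZero L] (hI : ∀ t, RowInterlaced (row η t) (row η (t - 1)))
    (hB : η (p.1 + 1, p.2 - 1) = false) (t : ZMod N) :
    RowInterlaced (row (η ∘ colSwap η p) t) (row (η ∘ colSwap η p) (t - 1)) := by
  rw [row_comp_colSwap, row_comp_colSwap]
  by_cases ht : (p.1, t) ∈ Vplus η p
  · have hx1 := right_eq_false_of_mem_Vplus hI hB ht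
    have hup := (hI t).comp_swap_left (particle_of_mem_Vplus ht) hx1
      (lower_right_eq_false_of_mem_Vplus hI hB ht)
    by_cases ht1 : (p.1, t - 1) ∈ Vplus η p
    · rw [if_pos ht, if_pos ht1]
      exact hup.comp_swap_right (by simpa [row] using hx1)
    · rw [if_pos ht, if_neg ht1]
      exact hup
  · rw [if_neg ht]
    by_cases ht1 : (p.1, t - 1) ∈ Vplus η p
    · rw [if_pos ht1]
      refine (hI t).comp_swap_right ?_
      rw [row, Bool.eq_false_iff]
      intro hx
      exact ht (by simpa using add_one_mem_Vplus ht1 (by simpa using hx))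
    · rw [if_neg ht1]
      exact hI t

lemma card_row_comp_colSwap [NeZero L] (t : ZMod N) :
    #{s | (η ∘ colSwap η p) (s, t) = true} = #{s | η (s, t) = true} := by
  change #{s | row (η ∘ colSwap η p) t s = true} = #{s | row η t s = true}
  rw [row_comp_colSwap]
  split_ifs
  · exact card_filter_comp_swap (W := univ) (fun s => row η t s = true) (by simp)
  · rfl

lemma interlaced_comp_colSwap [NeZero L] [NeZero N] {m1 : ℕ} (hI : Interlaced m1 η)
    (hB : η (p.1 + 1, p.2 - 1) = false) : Interlaced m1 (η ∘ colSwap η p) :=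
  interlaced_of_rowInterlaced (fun t => (card_row_comp_colSwap t).trans (hI.1 t))
    (rowInterlaced_comp_colSwap hI.rowInterlaced hB)

end colSwap

section Loop

variable {η : Cfg L N} {p r z : Site L N}

lemma eq_false_of_lt_dF {k : ℕ} (hk : k < dF η r) : η (r.1 + k, r.2 + 1) = false := by
  simpa using Nat.notMem_of_lt_sInf hk

lemma dF_eq_of_forall_lt {f : ℕ} (hf : η (r.1 + f, r.2 + 1) = true)
    (hlt : ∀ k < f, η (r.1 + k, r.2 + 1) = false) : dF η r = f := by
  refine le_antisymm (Nat.sInf_le hf) (not_lt.mp fun h => ?_)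
  have := Nat.sInf_mem (s := {k : ℕ | η (r.1 + k, r.2 + 1) = true}) ⟨f, hf⟩
  simp_all [dF]

lemma particle_stepUR [NeZero L] (h : ∃ s, η (s, r.2 + 1) = true) : η (stepUR η r) = true := by
  obtain ⟨s, hs⟩ := h
  have hmem : (s - r.1).val ∈ {k : ℕ | η (r.1 + k, r.2 + 1) = true} := by simpa using hs
  exact Nat.sInf_mem ⟨_, hmem⟩

lemma colSwap_of_particle (hI : ∀ t, RowInterlaced (row η t) (row η (t - 1)))
    (hB : η (p.1 + 1, p.2 - 1) = false) (hz : η z = true) :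
    colSwap η p z = (z.1 + ((Vplus η p).indicator (fun _ => 1) z : ℕ), z.2) := by
  by_cases h : z ∈ Vplus η p
  · have hz1 := fst_of_mem_Vplus h
    have hcol : (p.1, z.2) ∈ Vplus η p := hz1 ▸ h
    simp [colSwap, hcol, Set.indicator_of_mem h, hz1]
  · by_cases hcol : (p.1, z.2) ∈ Vplus η p
    · have hne : z.1 ≠ p.1 := fun h' => h (by rwa [← h'] at hcol)
      have hne1 : z.1 ≠ p.1 + 1 := fun h' => by
        have := right_eq_false_of_mem_Vplus hI hB hcol
        simp [← h', hz] at this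
      simp [colSwap, hcol, Set.indicator_of_notMem h, Equiv.swap_apply_of_ne_of_ne hne hne1]
    · simp [colSwap, hcol, Set.indicator_of_notMem h]

lemma colSwap_eq_self_of_lt_dF (hI : ∀ t, RowInterlaced (row η t) (row η (t - 1)))
    (hB : η (p.1 + 1, p.2 - 1) = false) (hr : η r = true) {k : ℕ} (hk : k < dF η r) :
    colSwap η p (r.1 + k, r.2 + 1) = (r.1 + k, r.2 + 1) := by
  unfold colSwap
  split_ifs with hcol
  · have hx := particle_of_mem_Vplus hcol
    have hne : r.1 + k ≠ p.1 := fun h => by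
      simp [← h, eq_false_of_lt_dF hk] at hx
    have hne1 : r.1 + k ≠ p.1 + 1 := by
      intro h
      rcases k with _ | k
      · have := lower_right_eq_false_of_mem_Vplus hI hB hcol
        simp only [Nat.cast_zero, add_zero] at h
        simp [← h, hr] at this
      · have h' : r.1 + k = p.1 := add_right_cancel (b := 1) (by rw [← h]; push_cast; ring)
        simp [← h', eq_false_of_lt_dF (show k < dF η r by omega)] at hx
    simp [Equiv.swap_apply_of_ne_of_ne hne hne1]
  · rfl

lemma indicator_le_dF_add_indicator [NeZero L] (habove : ∃ s, η (s, r.2 + 1) = true) :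
    (Vplus η p).indicator (fun _ => 1) r ≤
      dF η r + (Vplus η p).indicator (fun _ => 1) (stepUR η r) := by
  by_cases hrV : r ∈ Vplus η p
  · rcases Nat.eq_zero_or_pos (dF η r) with h0 | hpos
    · have hcol : (p.1, r.2) ∈ Vplus η p := fst_of_mem_Vplus hrV ▸ hrV
      have hw' : stepUR η r = (p.1, r.2 + 1) := by simp [stepUR, h0, fst_of_mem_Vplus hrV]
      have hw := particle_stepUR habove
      rw [hw'] at hw ⊢
      simp [Set.indicator_of_mem hrV, Set.indicator_of_mem (add_one_mem_Vplus hcol hw)]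
    · simp only [Set.indicator_of_mem hrV]
      omega
  · simp [Set.indicator_of_notMem hrV]

lemma dF_comp_colSwap_of_add_eq [NeZero L] (hI : ∀ t, RowInterlaced (row η t) (row η (t - 1)))
    (hB : η (p.1 + 1, p.2 - 1) = false) (habove : ∃ s, η (s, r.2 + 1) = true) (hr : η r = true)
    {f : ℕ} (hf : f + (Vplus η p).indicator (fun _ => 1) r =
      dF η r + (Vplus η p).indicator (fun _ => 1) (stepUR η r)) :
    dF (η ∘ colSwap η p) (colSwap η p r) = f := by
  set χ := (Vplus η p).indicator fun _ => (1 : ℕ)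
  set w := stepUR η r
  have hw : η w = true := particle_stepUR habove
  have hw1 : w.1 = r.1 + dF η r := rfl
  rw [colSwap_of_particle hI hB hr]
  apply dF_eq_of_forall_lt
  · have hpos : (r.1 + (χ r : ℕ) + (f : ℕ), r.2 + 1) = colSwap η p w := by
      rw [colSwap_of_particle hI hB hw]
      have := congrArg (Nat.cast : ℕ → ZMod L) hf
      push_cast at this
      ext
      · rw [hw1]
        linear_combination this
      · rfl
    rw [Function.comp_apply, hpos, colSwap_involutive]
    exact hw
  · intro k hk
    rw [Function.comp_apply]
    rcases lt_or_ge (k + χ r) (dF η r) with h | h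
    · rw [show r.1 + (χ r : ℕ) + (k : ZMod L) = r.1 + ((k + χ r : ℕ) : ZMod L) by
          push_cast; ring, colSwap_eq_self_of_lt_dF hI hB hr h]
      exact eq_false_of_lt_dF h
    · have hwV : w ∈ Vplus η p := by
        by_contra hwV
        have hχw : χ w = 0 := Set.indicator_of_notMem hwV _
        omega
      have hχw : χ w = 1 := Set.indicator_of_mem hwV _
      have hpos : r.1 + (χ r : ℕ) + (k : ZMod L) = p.1 := by
        rw [← fst_of_mem_Vplus hwV, hw1, ← show k + χ r = dF η r by omega]
        push_cast
        ring
      have hcol : (p.1, r.2 + 1) ∈ Vplus η p := fst_of_mem_Vplus hwV ▸ hwV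
      rw [hpos]
      simpa [colSwap, hcol] using right_eq_false_of_mem_Vplus hI hB hcol

lemma dF_comp_colSwap [NeZero L] (hI : ∀ t, RowInterlaced (row η t) (row η (t - 1)))
    (hB : η (p.1 + 1, p.2 - 1) = false) (habove : ∃ s, η (s, r.2 + 1) = true) (hr : η r = true) :
    dF (η ∘ colSwap η p) (colSwap η p r) + (Vplus η p).indicator (fun _ => 1) r =
      dF η r + (Vplus η p).indicator (fun _ => 1) (stepUR η r) := by
  have hle := indicator_le_dF_add_indicator (p := p) habove
  rw [dF_comp_colSwap_of_add_eq hI hB habove hr (Nat.sub_add_cancel hle)]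
  omega

lemma stepUR_comp_colSwap [NeZero L] (hI : ∀ t, RowInterlaced (row η t) (row η (t - 1)))
    (hB : η (p.1 + 1, p.2 - 1) = false) (habove : ∃ s, η (s, r.2 + 1) = true) (hr : η r = true) :
    stepUR (η ∘ colSwap η p) (colSwap η p r) = colSwap η p (stepUR η r) := by
  have := congrArg (Nat.cast : ℕ → ZMod L) (dF_comp_colSwap hI hB habove hr)
  push_cast at this
  rw [colSwap_of_particle hI hB (particle_stepUR habove)]
  ext
  · change (colSwap η p r).1 + (dF (η ∘ colSwap η p) (colSwap η p r) : ZMod L) =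
      r.1 + (dF η r : ZMod L) + _
    rw [colSwap_of_particle hI hB hr] at this ⊢
    linear_combination this
  · simp [stepUR, colSwap_of_particle hI hB hr]

end Loop

section Winding

variable {η : Cfg L N} {p r : Site L N}

lemma iterate_retTime_s15 : (stepUR η)^[retTime η r] r = r := by
  rcases Nat.eq_zero_or_pos (retTime η r) with h | h
  · rw [h, Function.iterate_zero, id]
  · exact (Nat.sInf_mem (Nat.nonempty_of_pos_sInf h)).2

lemma particle_iterate_stepUR [NeZero L] (hocc : ∀ t, ∃ s, η (s, t) = true) (hr : η r = true)
    (n : ℕ) : η ((stepUR η)^[n] r) = true := by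
  cases n with
  | zero => exact hr
  | succ n => rw [Function.iterate_succ_apply']; exact particle_stepUR (hocc _)

lemma iterate_stepUR_comp_colSwap [NeZero L] (hI : ∀ t, RowInterlaced (row η t) (row η (t - 1)))
    (hB : η (p.1 + 1, p.2 - 1) = false) (hocc : ∀ t, ∃ s, η (s, t) = true) (hr : η r = true)
    (n : ℕ) :
    (stepUR (η ∘ colSwap η p))^[n] (colSwap η p r) = colSwap η p ((stepUR η)^[n] r) := by
  induction n with
  | zero => rfl
  | succ n ih =>
    rw [Function.iterate_succ_apply', Function.iterate_succ_apply', ih,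
      stepUR_comp_colSwap hI hB (hocc _) (particle_iterate_stepUR hocc hr n)]

lemma retTime_comp_colSwap [NeZero L] (hI : ∀ t, RowInterlaced (row η t) (row η (t - 1)))
    (hB : η (p.1 + 1, p.2 - 1) = false) (hocc : ∀ t, ∃ s, η (s, t) = true) (hr : η r = true) :
    retTime (η ∘ colSwap η p) (colSwap η p r) = retTime η r := by
  simp only [retTime, iterate_stepUR_comp_colSwap hI hB hocc hr,
    colSwap_involutive.injective.eq_iff]

lemma windV_comp_colSwap [NeZero L] (hI : ∀ t, RowInterlaced (row η t) (row η (t - 1)))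
    (hB : η (p.1 + 1, p.2 - 1) = false) (hocc : ∀ t, ∃ s, η (s, t) = true) (hr : η r = true) :
    windV (η ∘ colSwap η p) (colSwap η p r) = windV η r := by
  rw [windV, windV, retTime_comp_colSwap hI hB hocc hr]

lemma windH_comp_colSwap [NeZero L] (hI : ∀ t, RowInterlaced (row η t) (row η (t - 1)))
    (hB : η (p.1 + 1, p.2 - 1) = false) (hocc : ∀ t, ∃ s, η (s, t) = true) (hr : η r = true) :
    windH (η ∘ colSwap η p) (colSwap η p r) = windH η r := by
  rw [windH, windH, retTime_comp_colSwap hI hB hocc hr]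
  congr 1
  set χ := fun i => (Vplus η p).indicator (fun _ => 1) ((stepUR η)^[i] r)
  have hstep := sum_congr rfl fun i (_ : i ∈ range (retTime η r)) =>
    dF_comp_colSwap (p := p) hI hB (hocc _) (particle_iterate_stepUR hocc hr i)
  simp only [sum_add_distrib, ← Function.iterate_succ_apply' (stepUR η),
    ← iterate_stepUR_comp_colSwap hI hB hocc hr] at hstep
  rw [sum_range_succ_eq_of_eq χ (by simp only [χ, iterate_retTime_s15]; rfl)] at hstep
  exact add_right_cancel hstep

end Winding

lemma Interlaced.exists_particle [NeZero L] [NeZero N] {m1 : ℕ} {η : Cfg L N} {r : Site L N}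
    (h : Interlaced m1 η) (hr : η r = true) (t : ZMod N) : ∃ s, η (s, t) = true := by
  have hpos : 0 < #{s | η (s, t) = true} := by
    rw [h.1 t, ← h.1 r.2]
    exact card_pos.mpr ⟨r.1, by simpa using hr⟩
  obtain ⟨s, hs⟩ := card_pos.mp hpos
  exact ⟨s, by simpa using hs⟩

lemma eq_false_of_one_le_dB {η : Cfg L N} {p : Site L N} (h : 1 ≤ dB η p) :
    η (p.1 + 1, p.2 - 1) = false := by
  rw [Bool.eq_false_iff]
  intro h1
  have := Nat.sInf_le (show 1 ∈ {k : ℕ | 0 < k ∧ η (p.1 + k, p.2 - 1) = true} from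
    ⟨one_pos, by simpa using h1⟩)
  rw [dB] at h
  omega

theorem moveR_preserves_sector_general
    {L N : ℕ} [NeZero L] [NeZero N]
    (m1 m2 : ℕ)
    (η : Cfg L N) (hη : InSector m1 m2 η)
    (p : Site L N) (hB : 1 ≤ dB η p) :
    InSector m1 m2 (moveR η p) := by
  obtain ⟨hI, hwind⟩ := hη
  have hrow := hI.rowInterlaced
  have hB' := eq_false_of_one_le_dB hB
  rw [moveR_eq_comp_colSwap hrow hB']
  refine ⟨interlaced_comp_colSwap hI hB', fun z hz => ?_⟩
  obtain ⟨r, hr, rfl⟩ : ∃ r, η r = true ∧ colSwap η p r = z :=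
    ⟨colSwap η p z, hz, colSwap_involutive z⟩
  have hocc := hI.exists_particle hr
  rw [windH_comp_colSwap hrow hB' hocc hr, windV_comp_colSwap hrow hB' hocc hr]
  exact hwind r hr

/-- If `B_p ≥ 1`, shifting every particle of `V_p⁺` one step to the right
produces again a valid interlaced configuration, in the same sector `Ω_{L,N;m1,m2}`. -/
theorem moveR_preserves_sector
    {L N : ℕ} [NeZero L] [NeZero N] (hL : 2 ≤ L) (hN : 2 ≤ N)
    (m1 m2 : ℕ) (hm1 : 1 < m1) (hm1L : m1 < L) (hm2 : 1 ≤ m2) (hm2N : m2 < N)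
    (hslope : m1 * N + m2 * L < L * N)
    (η : Cfg L N) (hη : InSector m1 m2 η)
    (p : Site L N) (hp : η p = true) (hB : 1 ≤ dB η p) :
    InSector m1 m2 (moveR η p) :=
  moveR_preserves_sector_general m1 m2 η hη p hB

end QWhittaker
end
end
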